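/- arXiv:1702.02831 — 8 statements merged into one kernel-verified Lean document; each statement's English description precedes it below -/
import Mathlib

section
/- Let k and n be positive integers with 3k/2 ≤ n ≤ 3k. If 𝓕 is a k-uniform family of subsets of [n] = {1,2,...,n} that contains no sunflower with 3 petals, then |𝓕| ≤ 3·C(n, ⌊n/3⌋), where C(n, ⌊n/3⌋) denotes the binomial coefficient 'n choose ⌊n/3⌋'. -/
/-- `{F₁, F₂, F₃}` is a sunflower with 3 petals: the three sets are pairwise
distinct and any pairwise intersection equals the common intersection. -/
def IsSunflower3 {α : Type*} [DecidableEq α] (F₁ F₂ F₃ : Finset α) : Prop :=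
  F₁ ≠ F₂ ∧ F₁ ≠ F₃ ∧ F₂ ≠ F₃ ∧
  F₁ ∩ F₂ = F₁ ∩ F₂ ∩ F₃ ∧ F₁ ∩ F₃ = F₁ ∩ F₂ ∩ F₃ ∧ F₂ ∩ F₃ = F₁ ∩ F₂ ∩ F₃

/-- A family is sunflower-free if no three of its members form a sunflower
with 3 petals. -/
def SunflowerFree {α : Type*} [DecidableEq α] (𝓕 : Finset (Finset α)) : Prop :=
  ∀ F₁ ∈ 𝓕, ∀ F₂ ∈ 𝓕, ∀ F₃ ∈ 𝓕, ¬ IsSunflower3 F₁ F₂ F₃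

open Finset Module


-- support lemma
lemma exists_large_support {X : Type*} [Fintype X] [DecidableEq X]
    (V : Submodule ℚ (X → ℚ)) :
    ∃ h ∈ V, finrank ℚ V ≤ (univ.filter fun x => h x ≠ 0).card := by
  classical
  -- pick h in V with maximal support
  set S : Set ℕ := {c | ∃ h ∈ V, (univ.filter fun x => h x ≠ 0).card = c} with hS
  have hne : S.Nonempty := ⟨_, 0, V.zero_mem, rfl⟩
  have hbdd : BddAbove S := ⟨Fintype.card X, by rintro c ⟨h, _, rfl⟩; exact le_trans (card_le_card (filter_subset _ _)) (by simp)⟩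
  obtain ⟨h, hhV, hcard⟩ := Nat.sSup_mem hne hbdd
  refine ⟨h, hhV, ?_⟩
  -- restriction to support is injective on V
  set s := univ.filter fun x => h x ≠ 0 with hs
  have : Function.Injective ((LinearMap.funLeft ℚ ℚ (fun y : {x // x ∈ s} => (y : X))).comp V.subtype) := by
    intro ⟨h₁, h₁V⟩ ⟨h₂, h₂V⟩ heq
    ext1
    by_contra hne'
    set g : X → ℚ := h₁ - h₂ with hg
    have hgV : g ∈ V := V.sub_mem h₁V h₂V
    have hgs : ∀ x ∈ s, g x = 0 := by
      intro x hx
      have := congrFun heq ⟨x, hx⟩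
      simpa [hg, LinearMap.funLeft, sub_eq_zero] using this
    have hgne : g ≠ 0 := fun h0 => hne' (by ext x; have := congrFun h0 x; simpa [hg, sub_eq_zero] using this)
    obtain ⟨x₀, hx₀⟩ : ∃ x₀, g x₀ ≠ 0 := by
      by_contra hc; push_neg at hc; exact hgne (funext hc)
    have hx₀s : x₀ ∉ s := fun hmem => hx₀ (hgs _ hmem)
    -- choose c avoiding bad values
    obtain ⟨c, hc⟩ := (Set.Finite.exists_notMem (Set.finite_range (fun x : X => -h x / g x) |>.insert 0))
    have hc0 : c ≠ 0 := fun h0 => hc (h0 ▸ Set.mem_insert _ _)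
    set h' : X → ℚ := h + c • g with hh'
    have hh'V : h' ∈ V := V.add_mem hhV (V.smul_mem c hgV)
    have hsup : ∀ x ∈ s, h' x ≠ 0 := by
      intro x hx
      by_cases hzx : g x = 0
      · simp only [hh', Pi.add_apply, Pi.smul_apply, hzx, smul_zero, add_zero]
        simpa [hs] using hx
      · intro habs
        apply hc
        refine Set.mem_insert_of_mem _ ⟨x, ?_⟩
        have : h x + c * g x = 0 := by simpa [hh'] using habs
        field_simp
        linarith
    have hsup₀ : h' x₀ ≠ 0 := by
      have : h x₀ = 0 := by simpa [hs] using hx₀s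
      simp only [hh', Pi.add_apply, Pi.smul_apply, this, zero_add, smul_eq_mul]
      exact mul_ne_zero hc0 hx₀
    have hcard' : s.card + 1 ≤ (univ.filter fun x => h' x ≠ 0).card := by
      have : insert x₀ s ⊆ univ.filter fun x => h' x ≠ 0 := by
        intro x hx
        rcases mem_insert.mp hx with rfl | hx
        · simp [hsup₀]
        · simp [hsup _ hx]
      calc s.card + 1 = (insert x₀ s).card := by rw [card_insert_of_notMem hx₀s]
        _ ≤ _ := card_le_card this
    have hmem : ((univ.filter fun x => h' x ≠ 0).card) ∈ S := ⟨h', hh'V, rfl⟩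
    have := le_csSup hbdd hmem
    omega
  have hfd : FiniteDimensional ℚ ({x // x ∈ s} → ℚ) := inferInstance
  have := LinearMap.finrank_le_finrank_of_injective this
  simpa using this

lemma slice_rank_key {X ι₁ ι₂ ι₃ : Type*} [Fintype X] [DecidableEq X]
    [Fintype ι₁] [Fintype ι₂] [Fintype ι₃]
    (T : X → X → X → ℚ)
    (f₁ : ι₁ → X → ℚ) (g₁ : ι₁ → X → X → ℚ)
    (f₂ : ι₂ → X → ℚ) (g₂ : ι₂ → X → X → ℚ)
    (f₃ : ι₃ → X → ℚ) (g₃ : ι₃ → X → X → ℚ)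
    (hrep : ∀ a b c, T a b c =
      ∑ i, f₁ i a * g₁ i b c + ∑ i, f₂ i b * g₂ i a c + ∑ i, f₃ i c * g₃ i a b)
    (hdiag : ∀ a, T a a a ≠ 0)
    (hoff : ∀ a b c, T a b c ≠ 0 → a = b ∧ b = c) :
    Fintype.card X ≤ Fintype.card ι₁ + Fintype.card ι₂ + Fintype.card ι₃ := by
  classical
  set Φ : (X → ℚ) →ₗ[ℚ] (ι₁ → ℚ) :=
    { toFun := fun h i => ∑ x, h x * f₁ i x
      map_add' := by intro a b; funext i; simp [add_mul, Finset.sum_add_distrib]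
      map_smul' := by intro c a; funext i; simp [Finset.mul_sum, mul_assoc] } with hΦ
  have hker : Fintype.card X - Fintype.card ι₁ ≤ finrank ℚ (LinearMap.ker Φ) := by
    have h1 := LinearMap.finrank_range_add_finrank_ker Φ
    have h2 : finrank ℚ (LinearMap.range Φ) ≤ Fintype.card ι₁ := by
      have := Submodule.finrank_le (LinearMap.range Φ)
      simpa [finrank_pi] using this
    have h3 : finrank ℚ (X → ℚ) = Fintype.card X := by simp [finrank_pi]
    omega
  obtain ⟨h, hhV, hsupp⟩ := exists_large_support (LinearMap.ker Φ)
  set s := univ.filter fun x => h x ≠ 0 with hs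
  set row : X → (X → ℚ) := fun y z => ∑ x, h x * T x y z with hrow
  set u : ι₂ → (X → ℚ) := fun i z => ∑ x, h x * g₂ i x z with hu
  set W : Submodule ℚ (X → ℚ) := Submodule.span ℚ (Set.range u ∪ Set.range f₃) with hW
  have hrowW : ∀ y, row y ∈ W := by
    intro y
    have hmain : row y = (∑ i, f₂ i y • u i) + (∑ i, (∑ x, h x * g₃ i x y) • f₃ i) := by
      funext z
      have hΦh : ∀ i, ∑ x, h x * f₁ i x = 0 := by
        intro i; exact congrFun (LinearMap.mem_ker.mp hhV) i
      have key : ∀ x, h x * T x y z = (∑ i, (h x * f₁ i x) * g₁ i y z) +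
          ((∑ i, f₂ i y * (h x * g₂ i x z)) + (∑ i, (h x * g₃ i x y) * f₃ i z)) := by
        intro x
        rw [hrep x y z, mul_add, mul_add, add_assoc]
        congr 1
        · rw [Finset.mul_sum]; exact Finset.sum_congr rfl fun i _ => by ring
        congr 1
        · rw [Finset.mul_sum]; exact Finset.sum_congr rfl fun i _ => by ring
        · rw [Finset.mul_sum]; exact Finset.sum_congr rfl fun i _ => by ring
      simp only [hrow, Pi.add_apply, Finset.sum_apply, Pi.smul_apply, smul_eq_mul]
      rw [Finset.sum_congr rfl fun x _ => key x]
      rw [Finset.sum_add_distrib, Finset.sum_add_distrib]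
      have e1 : ∑ x, ∑ i : ι₁, h x * f₁ i x * g₁ i y z = 0 := by
        rw [Finset.sum_comm]
        apply Finset.sum_eq_zero
        intro i _
        rw [← Finset.sum_mul, hΦh i, zero_mul]
      have e2 : ∑ x, ∑ i : ι₂, f₂ i y * (h x * g₂ i x z) = ∑ i : ι₂, f₂ i y * u i z := by
        rw [Finset.sum_comm]
        refine Finset.sum_congr rfl fun i _ => ?_
        rw [← Finset.mul_sum]
      have e3 : ∑ x, ∑ i : ι₃, h x * g₃ i x y * f₃ i z
          = ∑ i : ι₃, (∑ x, h x * g₃ i x y) * f₃ i z := by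
        rw [Finset.sum_comm]
        exact Finset.sum_congr rfl fun i _ => (Finset.sum_mul _ _ _).symm
      rw [e1, e2, e3, zero_add]
    rw [hmain]
    refine Submodule.add_mem _ (Submodule.sum_mem _ fun i _ => ?_) (Submodule.sum_mem _ fun i _ => ?_)
    · exact Submodule.smul_mem _ _ (Submodule.subset_span (Or.inl ⟨i, rfl⟩))
    · exact Submodule.smul_mem _ _ (Submodule.subset_span (Or.inr ⟨i, rfl⟩))
  have hrow_eq : ∀ y, row y = (h y * T y y y) • (Pi.single y 1 : X → ℚ) := by
    intro y
    funext z
    simp only [hrow, Pi.smul_apply, smul_eq_mul]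
    by_cases hyz : z = y
    · subst hyz
      rw [Finset.sum_eq_single z]
      · simp
      · intro x _ hxz
        rcases eq_or_ne (T x z z) 0 with hT | hT
        · simp [hT]
        · exact absurd (hoff x z z hT).1 hxz
      · simp
    · rw [Finset.sum_eq_zero, Pi.single_apply, if_neg (by exact hyz), mul_zero]
      intro x _
      rcases eq_or_ne (T x y z) 0 with hT | hT
      · simp [hT]
      · exact absurd ((hoff x y z hT).2) (by exact fun h => hyz h.symm)
  have hli : LinearIndependent ℚ (fun y : {x // x ∈ s} => row (y : X)) := by
    rw [Fintype.linearIndependent_iff]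
    intro g hg y
    have hcf := congrFun hg (y : X)
    simp only [Finset.sum_apply, Pi.smul_apply, smul_eq_mul, Pi.zero_apply] at hcf
    rw [Finset.sum_eq_single y] at hcf
    · rw [hrow_eq] at hcf
      simp only [Pi.smul_apply, Pi.single_apply, eq_self_iff_true, if_true, smul_eq_mul,
        mul_one] at hcf
      have hy : h (y : X) ≠ 0 := by
        have hy2 : (y : X) ∈ univ.filter fun x => h x ≠ 0 := y.2
        exact (mem_filter.mp hy2).2
      have hne := mul_ne_zero hy (hdiag (y : X))
      rcases mul_eq_zero.mp hcf with h' | h'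
      · exact h'
      · exact absurd h' hne
    · intro x _ hxy
      rw [hrow_eq]
      simp only [Pi.smul_apply, Pi.single_apply, smul_eq_mul]
      rw [if_neg, mul_zero, mul_zero]
      exact fun hh => hxy (Subtype.ext hh.symm)
    · intro hy; exact absurd (mem_univ y) hy
  have hcardW : s.card ≤ finrank ℚ W := by
    have hli' : LinearIndependent ℚ (fun y : {x // x ∈ s} =>
        (⟨row (y : X), hrowW _⟩ : W)) := by
      apply LinearIndependent.of_comp W.subtype
      exact hli
    have := hli'.fintype_card_le_finrank
    simpa using this
  have hWle : finrank ℚ W ≤ Fintype.card ι₂ + Fintype.card ι₃ := by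
    rw [hW]
    have hre : Set.range u ∪ Set.range f₃ = Set.range (Sum.elim u f₃) := by
      rw [Set.Sum.elim_range]
    rw [hre]
    calc finrank ℚ (Submodule.span ℚ (Set.range (Sum.elim u f₃)))
        ≤ Fintype.card (ι₂ ⊕ ι₃) := (finrank_span_le_card _).trans (by
          rw [Set.toFinset_range]
          exact (Finset.card_image_le).trans (by simp))
      _ = _ := by simp
  omega

namespace SFF
variable {n : ℕ}

noncomputable def χ (A : Finset (Fin n)) (i : Fin n) : ℚ := if i ∈ A then 1 else 0

noncomputable def ind (S A : Finset (Fin n)) : ℚ := if S ⊆ A then 1 else 0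

noncomputable def T (A B C : Finset (Fin n)) : ℚ := ∏ i, (χ A i + χ B i + χ C i - 2)

lemma prod_chi (S A : Finset (Fin n)) : ∏ i ∈ S, χ A i = ind S A := by
  unfold ind
  split_ifs with h
  · exact Finset.prod_eq_one fun i hi => by simp [χ, h hi]
  · obtain ⟨i, hiS, hiA⟩ : ∃ i ∈ S, i ∉ A := by
      by_contra hc; push_neg at hc; exact h hc
    exact Finset.prod_eq_zero hiS (by simp [χ, hiA])

lemma T_diag (A : Finset (Fin n)) : T A A A ≠ 0 := by
  unfold T
  rw [Finset.prod_ne_zero_iff]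
  intro i _
  unfold χ; split_ifs <;> norm_num

lemma T_off {k : ℕ} (𝓕 : Finset (Finset (Fin n)))
    (huniform : ∀ F ∈ 𝓕, F.card = k) (hsf : SunflowerFree 𝓕)
    {A B C : Finset (Fin n)} (hA : A ∈ 𝓕) (hB : B ∈ 𝓕) (hC : C ∈ 𝓕)
    (hT : T A B C ≠ 0) : A = B ∧ B = C := by
  have hfac : ∀ i : Fin n, χ A i + χ B i + χ C i ≠ 2 := by
    intro i h2
    have := Finset.prod_ne_zero_iff.mp hT i (mem_univ i)
    rw [h2] at this; norm_num at this
  have f1 : ∀ i, i ∈ A → i ∈ B → i ∈ C := by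
    intro i hiA hiB
    by_contra hiC
    apply hfac i
    unfold χ
    rw [if_pos hiA, if_pos hiB, if_neg hiC]
    norm_num
  have f2 : ∀ i, i ∈ A → i ∈ C → i ∈ B := by
    intro i hiA hiC
    by_contra hiB
    apply hfac i
    unfold χ
    rw [if_pos hiA, if_neg hiB, if_pos hiC]
    norm_num
  have f3 : ∀ i, i ∈ B → i ∈ C → i ∈ A := by
    intro i hiB hiC
    by_contra hiA
    apply hfac i
    unfold χ
    rw [if_neg hiA, if_pos hiB, if_pos hiC]
    norm_num
  have hcard : A.card = B.card := by rw [huniform A hA, huniform B hB]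
  have hcardAC : A.card = C.card := by rw [huniform A hA, huniform C hC]
  have hcardBC : B.card = C.card := by rw [huniform B hB, huniform C hC]
  by_cases hAB : A = B
  · by_cases hBC : B = C
    · exact ⟨hAB, hBC⟩
    · exfalso
      obtain ⟨i, hiB, hiC⟩ : ∃ i ∈ B, i ∉ C := by
        by_contra hc; push_neg at hc
        exact hBC (Finset.eq_of_subset_of_card_le hc (le_of_eq hcardBC.symm))
      exact hiC (f1 i (hAB ▸ hiB) hiB)
  · by_cases hAC : A = C
    · exfalso
      obtain ⟨i, hiA, hiB⟩ : ∃ i ∈ A, i ∉ B := by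
        by_contra hc; push_neg at hc
        exact hAB (Finset.eq_of_subset_of_card_le hc (le_of_eq hcard.symm))
      exact hiB (f2 i hiA (hAC ▸ hiA))
    · by_cases hBC : B = C
      · exfalso
        obtain ⟨i, hiB, hiA⟩ : ∃ i ∈ B, i ∉ A := by
          by_contra hc; push_neg at hc
          exact hAB ((Finset.eq_of_subset_of_card_le hc (le_of_eq hcard)).symm)
        exact hiA (f3 i hiB (hBC ▸ hiB))
      · exfalso
        apply hsf A hA B hB C hC
        refine ⟨hAB, hAC, hBC, ?_, ?_, ?_⟩
        · apply Finset.Subset.antisymm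
          · intro i hi
            simp only [mem_inter] at hi ⊢
            exact ⟨⟨hi.1, hi.2⟩, f1 i hi.1 hi.2⟩
          · exact Finset.inter_subset_left
        · apply Finset.Subset.antisymm
          · intro i hi
            simp only [mem_inter] at hi ⊢
            exact ⟨⟨hi.1, f2 i hi.1 hi.2⟩, hi.2⟩
          · intro i hi
            simp only [mem_inter] at hi ⊢
            exact ⟨hi.1.1, hi.2⟩
        · apply Finset.Subset.antisymm
          · intro i hi
            simp only [mem_inter] at hi ⊢
            exact ⟨⟨f3 i hi.1 hi.2, hi.1⟩, hi.2⟩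
          · intro i hi
            simp only [mem_inter] at hi ⊢
            exact ⟨hi.1.2, hi.2⟩

noncomputable def term (A B C : Finset (Fin n)) (i : Fin n) (j : Fin 4) : ℚ :=
  if j = 0 then χ A i else if j = 1 then χ B i else if j = 2 then χ C i else -2

def Sj (φ : Fin n → Fin 4) (j : Fin 4) : Finset (Fin n) := univ.filter fun i => φ i = j

lemma T_expand (A B C : Finset (Fin n)) :
    T A B C = ∑ φ : Fin n → Fin 4, ∏ i, term A B C i (φ i) := by
  unfold T
  have : ∀ i : Fin n, χ A i + χ B i + χ C i - 2 = ∑ j : Fin 4, term A B C i j := by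
    intro i
    rw [Fin.sum_univ_four]
    have e0 : term A B C i 0 = χ A i := rfl
    have e1 : term A B C i 1 = χ B i := rfl
    have e2 : term A B C i 2 = χ C i := rfl
    have e3 : term A B C i 3 = -2 := rfl
    rw [e0, e1, e2, e3]
    ring
  rw [Finset.prod_congr rfl fun i _ => this i, Finset.prod_univ_sum]
  rw [Fintype.piFinset_univ]

lemma prod_term (φ : Fin n → Fin 4) (A B C : Finset (Fin n)) :
    ∏ i, term A B C i (φ i) =
      ind (Sj φ 0) A * ind (Sj φ 1) B * ind (Sj φ 2) C * (-2 : ℚ) ^ (Sj φ 3).card := by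
  rw [← Finset.prod_fiberwise univ φ (fun i => term A B C i (φ i)), Fin.prod_univ_four]
  have h0 : ∏ i ∈ univ.filter (fun i => φ i = 0), term A B C i (φ i) = ind (Sj φ 0) A := by
    rw [← prod_chi]
    exact Finset.prod_congr rfl fun i hi => by
      have hφ : φ i = 0 := (mem_filter.mp hi).2
      simp [term, hφ]
  have h1 : ∏ i ∈ univ.filter (fun i => φ i = 1), term A B C i (φ i) = ind (Sj φ 1) B := by
    rw [← prod_chi]
    exact Finset.prod_congr rfl fun i hi => by
      have hφ : φ i = 1 := (mem_filter.mp hi).2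
      simp [term, hφ]
  have h2 : ∏ i ∈ univ.filter (fun i => φ i = 2), term A B C i (φ i) = ind (Sj φ 2) C := by
    rw [← prod_chi]
    exact Finset.prod_congr rfl fun i hi => by
      have hφ : φ i = 2 := (mem_filter.mp hi).2
      simp [term, hφ]
  have h3 : ∏ i ∈ univ.filter (fun i => φ i = 3), term A B C i (φ i)
      = (-2 : ℚ) ^ (Sj φ 3).card := by
    rw [← Finset.prod_const]
    exact Finset.prod_congr rfl fun i hi => by
      have hφ : φ i = 3 := (mem_filter.mp hi).2
      simp [term, hφ]
  rw [h0, h1, h2, h3]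

lemma cards_sum (φ : Fin n → Fin 4) :
    (Sj φ 0).card + (Sj φ 1).card + (Sj φ 2).card ≤ n := by
  have d01 : Disjoint (Sj φ 0) (Sj φ 1) := by
    rw [Finset.disjoint_left]; intro i h0 h1
    have := (mem_filter.mp h0).2; have := (mem_filter.mp h1).2
    simp_all
  have d012 : Disjoint (Sj φ 0 ∪ Sj φ 1) (Sj φ 2) := by
    rw [Finset.disjoint_left]; intro i h01 h2
    have h2' := (mem_filter.mp h2).2
    rcases mem_union.mp h01 with h | h
    · have := (mem_filter.mp h).2; simp_all
    · have := (mem_filter.mp h).2; simp_all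
  calc (Sj φ 0).card + (Sj φ 1).card + (Sj φ 2).card
      = (Sj φ 0 ∪ Sj φ 1).card + (Sj φ 2).card := by
        rw [Finset.card_union_of_disjoint d01]
    _ = (Sj φ 0 ∪ Sj φ 1 ∪ Sj φ 2).card := (Finset.card_union_of_disjoint d012).symm
    _ ≤ (univ : Finset (Fin n)).card := Finset.card_le_card (subset_univ _)
    _ = n := by simp

lemma count_between (S A : Finset (Fin n)) (m : ℕ) (hS : S ⊆ A) (hSm : S.card ≤ m)
    (hmA : m ≤ A.card) :
    (((univ : Finset (Fin n)).powersetCard m).filter fun S' => S ⊆ S' ∧ S' ⊆ A).card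
      = (A.card - S.card).choose (m - S.card) := by
  rw [← Finset.card_sdiff_of_subset hS, ← Finset.card_powersetCard (m - S.card) (A \ S)]
  apply Finset.card_bij' (fun S' _ => S' \ S) (fun t _ => S ∪ t)
  · intro S' hS'
    rw [mem_filter, Finset.mem_powersetCard] at hS'
    obtain ⟨⟨_, hcard⟩, hsub, hsubA⟩ := hS'
    rw [Finset.mem_powersetCard]
    constructor
    · exact Finset.sdiff_subset_sdiff hsubA (le_refl S)
    · rw [Finset.card_sdiff_of_subset hsub, hcard]
  · intro t ht
    rw [Finset.mem_powersetCard] at ht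
    obtain ⟨htsub, htcard⟩ := ht
    have hdisj : Disjoint S t := by
      rw [Finset.disjoint_left]
      intro i hiS hit
      exact (Finset.mem_sdiff.mp (htsub hit)).2 hiS
    rw [mem_filter, Finset.mem_powersetCard]
    refine ⟨⟨subset_univ _, ?_⟩, Finset.subset_union_left, ?_⟩
    · rw [Finset.card_union_of_disjoint hdisj, htcard]
      omega
    · exact Finset.union_subset hS (htsub.trans Finset.sdiff_subset)
  · intro S' hS'
    rw [mem_filter, Finset.mem_powersetCard] at hS'
    exact Finset.union_sdiff_of_subset hS'.2.1
  · intro t ht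
    rw [Finset.mem_powersetCard] at ht
    have hdisj : Disjoint S t := by
      rw [Finset.disjoint_left]
      intro i hiS hit
      exact (Finset.mem_sdiff.mp (ht.1 hit)).2 hiS
    exact Finset.union_sdiff_cancel_left hdisj

lemma sum_ind (k m : ℕ) (hmk : m ≤ k) (S A : Finset (Fin n)) (hA : A.card = k)
    (hSm : S.card ≤ m) :
    ∑ S' : {S' : Finset (Fin n) // S'.card = m}, (if S ⊆ S'.1 then ind S'.1 A else 0)
      = (((k - S.card).choose (m - S.card) : ℕ) : ℚ) * ind S A := by
  rw [← Finset.sum_subtype ((univ : Finset (Fin n)).powersetCard m)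
      (fun S' => by rw [Finset.mem_powersetCard_univ])
      (fun S' => if S ⊆ S' then ind S' A else 0)]
  rw [Finset.sum_congr rfl (fun S' _ => show (if S ⊆ S' then ind S' A else 0)
      = if S ⊆ S' ∧ S' ⊆ A then (1:ℚ) else 0 by
    unfold ind; split_ifs with h1 h2 h3 <;> first | rfl | tauto)]
  rw [Finset.sum_boole]
  by_cases hSA : S ⊆ A
  · rw [count_between S A m hSA hSm (hA ▸ hmk), hA]
    unfold ind
    rw [if_pos hSA, mul_one]
  · have : (((univ : Finset (Fin n)).powersetCard m).filter fun S' => S ⊆ S' ∧ S' ⊆ A) = ∅ := by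
      apply Finset.filter_false_of_mem
      intro S' _
      rintro ⟨h1, h2⟩
      exact hSA (h1.trans h2)
    rw [this]
    unfold ind
    rw [if_neg hSA, mul_zero]
    simp

lemma inner_sum (k m : ℕ) (hmk : m ≤ k) (A S₀ : Finset (Fin n)) (hA : A.card = k)
    (hS₀ : S₀.card ≤ m) (q : ℚ) (P : Prop) [Decidable P] :
    ∑ S : {S' : Finset (Fin n) // S'.card = m},
        ind S.1 A * (if P ∧ S₀ ⊆ S.1 then
          q / (((k - S₀.card).choose (m - S₀.card) : ℕ) : ℚ) else 0)
      = if P then ind S₀ A * q else 0 := by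
  have hc : (((k - S₀.card).choose (m - S₀.card) : ℕ) : ℚ) ≠ 0 := by
    rw [Nat.cast_ne_zero]
    exact (Nat.choose_pos (by omega)).ne'
  by_cases hP : P
  · simp only [hP, true_and, if_true]
    have step : ∀ S : {S' : Finset (Fin n) // S'.card = m},
        ind S.1 A * (if S₀ ⊆ S.1 then
            q / (((k - S₀.card).choose (m - S₀.card) : ℕ) : ℚ) else 0)
          = (if S₀ ⊆ S.1 then ind S.1 A else 0)
            * (q / (((k - S₀.card).choose (m - S₀.card) : ℕ) : ℚ)) := by
      intro S; split_ifs <;> simp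
    rw [Finset.sum_congr rfl fun S _ => step S, ← Finset.sum_mul,
      SFF.sum_ind k m hmk S₀ A hA hS₀]
    field_simp
  · simp [hP]



noncomputable def E (φ : Fin n → Fin 4) : ℚ := (-2) ^ (Sj φ 3).card

def cl (m : ℕ) (φ : Fin n → Fin 4) : ℕ :=
  if (Sj φ 0).card ≤ m then 0 else if (Sj φ 1).card ≤ m then 1 else 2

noncomputable def g1 (k m : ℕ) (B C S : Finset (Fin n)) : ℚ :=
  ∑ φ : Fin n → Fin 4, if cl m φ = 0 ∧ Sj φ 0 ⊆ S then
    (ind (Sj φ 1) B * ind (Sj φ 2) C * E φ)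
      / (((k - (Sj φ 0).card).choose (m - (Sj φ 0).card) : ℕ) : ℚ) else 0

noncomputable def g2 (k m : ℕ) (A C S : Finset (Fin n)) : ℚ :=
  ∑ φ : Fin n → Fin 4, if cl m φ = 1 ∧ Sj φ 1 ⊆ S then
    (ind (Sj φ 0) A * ind (Sj φ 2) C * E φ)
      / (((k - (Sj φ 1).card).choose (m - (Sj φ 1).card) : ℕ) : ℚ) else 0

noncomputable def g3 (k m : ℕ) (A B S : Finset (Fin n)) : ℚ :=
  ∑ φ : Fin n → Fin 4, if cl m φ = 2 ∧ Sj φ 2 ⊆ S then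
    (ind (Sj φ 0) A * ind (Sj φ 1) B * E φ)
      / (((k - (Sj φ 2).card).choose (m - (Sj φ 2).card) : ℕ) : ℚ) else 0

lemma sum1 (k m : ℕ) (hmk : m ≤ k) (A B C : Finset (Fin n)) (hA : A.card = k) :
    ∑ S : {S' : Finset (Fin n) // S'.card = m}, ind S.1 A * g1 k m B C S.1
      = ∑ φ : Fin n → Fin 4, if cl m φ = 0 then
          ind (Sj φ 0) A * (ind (Sj φ 1) B * ind (Sj φ 2) C * E φ) else 0 := by
  unfold g1
  rw [Finset.sum_congr rfl fun S _ => Finset.mul_sum _ _ _]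
  rw [Finset.sum_comm]
  refine Finset.sum_congr rfl fun φ _ => ?_
  by_cases hφ : cl m φ = 0
  · have hS₀ : (Sj φ 0).card ≤ m := by
      have hcs := cards_sum φ
      unfold cl at hφ
      split_ifs at hφ <;> omega
    exact inner_sum k m hmk A (Sj φ 0) hA hS₀
      (ind (Sj φ 1) B * ind (Sj φ 2) C * E φ) (cl m φ = 0)
  · rw [if_neg hφ]
    apply Finset.sum_eq_zero
    intro S _
    rw [if_neg (fun hco => hφ hco.1), mul_zero]

lemma sum2 (k m : ℕ) (hmk : m ≤ k) (A B C : Finset (Fin n)) (hB : B.card = k) :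
    ∑ S : {S' : Finset (Fin n) // S'.card = m}, ind S.1 B * g2 k m A C S.1
      = ∑ φ : Fin n → Fin 4, if cl m φ = 1 then
          ind (Sj φ 1) B * (ind (Sj φ 0) A * ind (Sj φ 2) C * E φ) else 0 := by
  unfold g2
  rw [Finset.sum_congr rfl fun S _ => Finset.mul_sum _ _ _]
  rw [Finset.sum_comm]
  refine Finset.sum_congr rfl fun φ _ => ?_
  by_cases hφ : cl m φ = 1
  · have hS₀ : (Sj φ 1).card ≤ m := by
      have hcs := cards_sum φ
      unfold cl at hφ
      split_ifs at hφ <;> omega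
    exact inner_sum k m hmk B (Sj φ 1) hB hS₀
      (ind (Sj φ 0) A * ind (Sj φ 2) C * E φ) (cl m φ = 1)
  · rw [if_neg hφ]
    apply Finset.sum_eq_zero
    intro S _
    rw [if_neg (fun hco => hφ hco.1), mul_zero]

lemma sum3 (k m : ℕ) (hmk : m ≤ k) (hn3 : n ≤ 3 * m + 2)
    (A B C : Finset (Fin n)) (hC : C.card = k) :
    ∑ S : {S' : Finset (Fin n) // S'.card = m}, ind S.1 C * g3 k m A B S.1
      = ∑ φ : Fin n → Fin 4, if cl m φ = 2 then
          ind (Sj φ 2) C * (ind (Sj φ 0) A * ind (Sj φ 1) B * E φ) else 0 := by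
  unfold g3
  rw [Finset.sum_congr rfl fun S _ => Finset.mul_sum _ _ _]
  rw [Finset.sum_comm]
  refine Finset.sum_congr rfl fun φ _ => ?_
  by_cases hφ : cl m φ = 2
  · have hS₀ : (Sj φ 2).card ≤ m := by
      have hcs := cards_sum φ
      unfold cl at hφ
      split_ifs at hφ <;> omega
    exact inner_sum k m hmk C (Sj φ 2) hC hS₀
      (ind (Sj φ 0) A * ind (Sj φ 1) B * E φ) (cl m φ = 2)
  · rw [if_neg hφ]
    apply Finset.sum_eq_zero
    intro S _
    rw [if_neg (fun hco => hφ hco.1), mul_zero]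

lemma rep (k m : ℕ) (hmk : m ≤ k) (hn3 : n ≤ 3 * m + 2)
    (A B C : Finset (Fin n)) (hA : A.card = k) (hB : B.card = k) (hC : C.card = k) :
    T A B C = ∑ S : {S' : Finset (Fin n) // S'.card = m}, ind S.1 A * g1 k m B C S.1
      + ∑ S : {S' : Finset (Fin n) // S'.card = m}, ind S.1 B * g2 k m A C S.1
      + ∑ S : {S' : Finset (Fin n) // S'.card = m}, ind S.1 C * g3 k m A B S.1 := by
  rw [sum1 k m hmk A B C hA, sum2 k m hmk A B C hB, sum3 k m hmk hn3 A B C hC]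
  rw [T_expand, ← Finset.sum_add_distrib, ← Finset.sum_add_distrib]
  refine Finset.sum_congr rfl fun φ _ => ?_
  rw [prod_term]
  have hcl : cl m φ = 0 ∨ cl m φ = 1 ∨ cl m φ = 2 := by
    unfold cl; split_ifs <;> simp
  have hE : (-2 : ℚ) ^ (Sj φ 3).card = E φ := rfl
  rw [hE]
  rcases hcl with h | h | h
  · rw [if_pos h, if_neg (by omega), if_neg (by omega)]
    ring
  · rw [if_neg (by omega), if_pos h, if_neg (by omega)]
    ring
  · rw [if_neg (by omega), if_neg (by omega), if_pos h]
    ring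

end SFF

theorem stmt_0 (k n : ℕ) (hk : 0 < k) (hn : 0 < n)
    (h1 : 3 * k ≤ 2 * n) (h2 : n ≤ 3 * k)
    (𝓕 : Finset (Finset (Fin n)))
    (huniform : ∀ F ∈ 𝓕, F.card = k)
    (hsf : SunflowerFree 𝓕) :
    𝓕.card ≤ 3 * Nat.choose n (n / 3) := by
  classical
  have hmk : n / 3 ≤ k := by omega
  have hn3 : n ≤ 3 * (n / 3) + 2 := by omega
  have key := slice_rank_key
    (X := {A : Finset (Fin n) // A ∈ 𝓕})
    (ι₁ := {S' : Finset (Fin n) // S'.card = n / 3})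
    (ι₂ := {S' : Finset (Fin n) // S'.card = n / 3})
    (ι₃ := {S' : Finset (Fin n) // S'.card = n / 3})
    (fun A B C => SFF.T A.1 B.1 C.1)
    (fun S A => SFF.ind S.1 A.1) (fun S B C => SFF.g1 k (n / 3) B.1 C.1 S.1)
    (fun S B => SFF.ind S.1 B.1) (fun S A C => SFF.g2 k (n / 3) A.1 C.1 S.1)
    (fun S C => SFF.ind S.1 C.1) (fun S A B => SFF.g3 k (n / 3) A.1 B.1 S.1)
    (fun A B C => SFF.rep k (n / 3) hmk hn3 A.1 B.1 C.1
      (huniform A.1 A.2) (huniform B.1 B.2) (huniform C.1 C.2))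
    (fun A => SFF.T_diag A.1)
    (fun a b c hT => by
      obtain ⟨e1, e2⟩ := SFF.T_off 𝓕 huniform hsf a.2 b.2 c.2 hT
      exact ⟨Subtype.ext e1, Subtype.ext e2⟩)
  rw [Fintype.card_coe] at key
  rw [Fintype.card_finset_len, Fintype.card_fin] at key
  omega
end

section
/- Let n be a positive integer and let 𝓕 be a family of subsets of [n] = {1,2,...,n} that contains no sunflower with 3 petals. Then |𝓕| ≤ 3·⌈n/3⌉·C(n, ⌊n/3⌋) + 2·∑_{i=0}^{⌈n/3⌉} C(n, i), where C(n, i) denotes the binomial coefficient 'n choose i'. -/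
open Finset Module

section SliceRank

variable {K α : Type*} [Field K]

theorem Submodule.exists_mem_forall_apply_ne_zero [Infinite K] (V : Submodule K (α → K))
    (s : Finset α) (h : ∀ a ∈ s, ∃ ψ ∈ V, ψ a ≠ 0) : ∃ φ ∈ V, ∀ a ∈ s, φ a ≠ 0 := by
  classical
  induction s using Finset.induction with
  | empty => exact ⟨0, V.zero_mem, by simp⟩
  | insert a s _ ih =>
    obtain ⟨φ, hφV, hφ⟩ := ih fun b hb => h b (mem_insert_of_mem hb)
    obtain ⟨ψ, hψV, hψa⟩ := h a (mem_insert_self a s)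
    -- all but finitely many `c` keep `φ + c • ψ` nonzero on `insert a s`
    obtain ⟨c, hc⟩ := Infinite.exists_notMem_finset ((insert a s).image fun b => -φ b / ψ b)
    refine ⟨φ + c • ψ, V.add_mem hφV (V.smul_mem c hψV), fun b hb hzero => ?_⟩
    simp only [Pi.add_apply, Pi.smul_apply, smul_eq_mul] at hzero
    by_cases hψb : ψ b = 0
    · have hba : b ≠ a := fun e => hψa (e ▸ hψb)
      exact hφ b ((mem_insert.1 hb).resolve_left hba) (by simpa [hψb] using hzero)
    · have hcb : -φ b / ψ b = c := by rw [div_eq_iff hψb]; linear_combination -hzero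
      exact hc (mem_image.2 ⟨b, hb, hcb⟩)

variable [Fintype α]

theorem Submodule.exists_mem_finrank_le_card_support [Infinite K] [DecidableEq K]
    (V : Submodule K (α → K)) : ∃ φ ∈ V, finrank K V ≤ #{a | φ a ≠ 0} := by
  classical
  let S : Finset α := {a | ∃ ψ ∈ V, ψ a ≠ 0}
  obtain ⟨φ, hφV, hφ⟩ := V.exists_mem_forall_apply_ne_zero S fun a ha => by simpa [S] using ha
  refine ⟨φ, hφV, le_trans ?_ (card_le_card fun a ha => by simpa using hφ a ha)⟩
  have hinj : Function.Injective ((LinearMap.funLeft K K ((↑) : S → α)).comp V.subtype) := by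
    intro x y hxy
    ext a
    by_cases ha : a ∈ S
    · simpa [LinearMap.funLeft] using congrFun hxy ⟨a, ha⟩
    · simp only [S, mem_filter, mem_univ, true_and, not_exists, not_and, not_not] at ha
      rw [ha x x.2, ha y y.2]
  simpa using LinearMap.finrank_le_finrank_of_injective hinj

theorem Matrix.rank_add_le (A B : Matrix α α K) : (A + B).rank ≤ A.rank + B.rank := by
  rw [Matrix.rank, Matrix.rank, Matrix.rank, Matrix.mulVecLin_add]
  refine (Submodule.finrank_mono ?_).trans (Submodule.finrank_add_le_finrank_add_finrank _ _)
  rintro _ ⟨v, rfl⟩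
  exact Submodule.add_mem_sup ⟨v, rfl⟩ ⟨v, rfl⟩

theorem Matrix.rank_le_finrank_of_col_mem {A : Matrix α α K} {W : Submodule K (α → K)}
    (h : ∀ j, A.col j ∈ W) : A.rank ≤ finrank K W := by
  rw [Matrix.rank_eq_finrank_span_cols]
  exact Submodule.finrank_mono (Submodule.span_le.2 (Set.range_subset_iff.2 h))

theorem card_le_of_slice_decomposition [Infinite K] [DecidableEq K]
    (T : α → α → α → K) (hdiag : ∀ a, T a a a ≠ 0)
    (hoff : ∀ a b c, ¬(a = b ∧ a = c) → T a b c = 0)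
    (W₁ W₂ W₃ : Submodule K (α → K)) (T₁ T₂ T₃ : α × α → α → K)
    (h₁ : ∀ p, T₁ p ∈ W₁) (h₂ : ∀ p, T₂ p ∈ W₂) (h₃ : ∀ p, T₃ p ∈ W₃)
    (hT : ∀ a b c, T a b c = T₁ (b, c) a + T₂ (a, c) b + T₃ (a, b) c) :
    Fintype.card α ≤ finrank K W₁ + finrank K W₂ + finrank K W₃ := by
  classical
  -- Contracting `T` along some `φ` orthogonal to `W₁` kills the `T₁` part and leaves a diagonal
  -- matrix of rank `#{a | φ a ≠ 0}`: the sum of one with columns in `W₂` and one with rows in `W₃`.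
  let L := (dotProductBilin K K).compl₂ W₁.subtype
  have hker : Fintype.card α ≤ finrank K W₁ + finrank K (LinearMap.ker L) := by
    have hL := L.finrank_range_add_finrank_ker
    have hrange := (LinearMap.range L).finrank_le.trans_eq Subspace.dual_finrank_eq
    rw [finrank_fintype_fun_eq_card] at hL
    omega
  obtain ⟨φ, hφ, hsupp⟩ := (LinearMap.ker L).exists_mem_finrank_le_card_support
  have hφ₁ : ∀ p, ∑ a, φ a * T₁ p a = 0 := fun p => LinearMap.congr_fun hφ ⟨T₁ p, h₁ p⟩
  let M₂ : Matrix α α K := .of fun b c => ∑ a, φ a * T₂ (a, c) b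
  let M₃ : Matrix α α K := .of fun b c => ∑ a, φ a * T₃ (a, b) c
  have hM : M₂ + M₃ = Matrix.diagonal fun b => φ b * T b b b := by
    ext b c
    calc (M₂ + M₃) b c = ∑ a, φ a * T a b c := by
          simp only [Matrix.add_apply, Matrix.of_apply, M₂, M₃, hT, mul_add, sum_add_distrib, hφ₁,
            zero_add]
      _ = _ := by
          rw [Matrix.diagonal_apply]
          split_ifs with hbc
          · subst hbc
            exact sum_eq_single b (fun a _ hab => by rw [hoff a b b (hab ·.1), mul_zero]) (by simp)
          · exact sum_eq_zero fun a _ => by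
              rw [hoff a b c fun h => hbc (h.1.symm.trans h.2), mul_zero]
  have hrank : #{a | φ a ≠ 0} = (M₂ + M₃).rank := by
    rw [hM, Matrix.rank_diagonal, Fintype.card_subtype]
    simp [hdiag]
  have hrank₂ : M₂.rank ≤ finrank K W₂ := Matrix.rank_le_finrank_of_col_mem fun c => by
    convert W₂.sum_mem (t := univ) fun a _ => W₂.smul_mem (φ a) (h₂ (a, c)) using 1
    ext b; simp [M₂]
  have hrank₃ : M₃.rank ≤ finrank K W₃ := by
    rw [← Matrix.rank_transpose]
    refine Matrix.rank_le_finrank_of_col_mem fun b => ?_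
    convert W₃.sum_mem (t := univ) fun a _ => W₃.smul_mem (φ a) (h₃ (a, b)) using 1
    ext c; simp [M₃]
  have := Matrix.rank_add_le M₂ M₃
  omega

end SliceRank

section Sunflower

variable {α : Type*} [DecidableEq α]

theorem SunflowerFree.mono {𝓕 𝓖 : Finset (Finset α)} (h : 𝓖 ⊆ 𝓕) (hsf : SunflowerFree 𝓕) :
    SunflowerFree 𝓖 :=
  fun F₁ h₁ F₂ h₂ F₃ h₃ => hsf F₁ (h h₁) F₂ (h h₂) F₃ (h h₃)

theorem eq_and_eq_of_not_isSunflower3 {x y z : Finset α} (hxy : #x = #y) (hxz : #x = #z)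
    (hsub : x ∩ y ⊆ z ∧ x ∩ z ⊆ y ∧ y ∩ z ⊆ x) (hsf : ¬IsSunflower3 x y z) : x = y ∧ x = z := by
  obtain ⟨h₁, h₂, h₃⟩ := hsub
  by_contra hne
  have hxy' : x ≠ y := by
    rintro rfl
    rw [inter_self] at h₁
    exact hne ⟨rfl, eq_of_subset_of_card_le h₁ hxz.ge⟩
  have hxz' : x ≠ z := by
    rintro rfl
    rw [inter_self] at h₂
    exact hne ⟨eq_of_subset_of_card_le h₂ hxy.ge, rfl⟩
  have hyz' : y ≠ z := by
    rintro rfl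
    rw [inter_self] at h₃
    have := eq_of_subset_of_card_le h₃ hxy.le
    exact hne ⟨this.symm, this.symm⟩
  refine hsf ⟨hxy', hxz', hyz', ?_, ?_, ?_⟩ <;> ext i <;> simp only [mem_inter] <;>
    grind

theorem card_filter_superset_powersetCard {A F : Finset α} {t : ℕ} (hAF : A ⊆ F) (hA : #A ≤ t) :
    #{D ∈ F.powersetCard t | A ⊆ D} = (#F - #A).choose (t - #A) := by
  rw [← card_sdiff_of_subset hAF, ← card_powersetCard]
  refine card_nbij' (· \ A) (A ∪ ·) (fun D hD => ?_) (fun D hD => ?_) (fun D hD => ?_)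
    (fun D hD => ?_) <;> simp only [mem_coe, mem_filter, mem_powersetCard, subset_sdiff] at hD ⊢
  · obtain ⟨⟨hDF, hDt⟩, hAD⟩ := hD
    exact ⟨⟨sdiff_subset.trans hDF, disjoint_sdiff_self_left⟩,
      by rw [card_sdiff_of_subset hAD, hDt]⟩
  · obtain ⟨⟨hDF, hAD⟩, hDt⟩ := hD
    refine ⟨⟨union_subset hAF hDF, ?_⟩, subset_union_left⟩
    rw [card_union_of_disjoint hAD.symm, hDt]
    omega
  · exact union_sdiff_of_subset hD.2
  · exact union_sdiff_cancel_left hD.1.2.symm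

def supersetIndicator (A x : Finset α) : ℚ := if A ⊆ x then 1 else 0

variable [Fintype α]

theorem supersetIndicator_eq_inv_choose_mul_sum {A F : Finset α} {t k : ℕ} (hF : #F = k)
    (hA : #A ≤ t) (htk : t ≤ k) :
    supersetIndicator A F = ((k - #A).choose (t - #A) : ℚ)⁻¹ *
      ∑ D ∈ powersetCard t univ with A ⊆ D, supersetIndicator D F := by
  simp only [supersetIndicator]
  rw [sum_boole, filter_filter]
  split_ifs with hAF
  · have hcount : ({D ∈ powersetCard t univ | A ⊆ D ∧ D ⊆ F} : Finset _) =
        {D ∈ F.powersetCard t | A ⊆ D} := by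
      ext D; simp only [mem_filter, mem_powersetCard, subset_univ, true_and]; tauto
    have hpos : 0 < (k - #A).choose (t - #A) := Nat.choose_pos (by omega)
    rw [hcount, card_filter_superset_powersetCard hAF hA, hF]
    field_simp
  · rw [filter_false_of_mem fun D _ h => hAF (h.1.trans h.2)]
    simp

def supersetIndicatorSpan (𝒜 : Finset (Finset α)) (t : ℕ) : Submodule ℚ (𝒜 → ℚ) :=
  Submodule.span ℚ
    (Set.range fun D : powersetCard t (univ : Finset α) =>
      fun x : 𝒜 => supersetIndicator (D : Finset α) x)

theorem finrank_supersetIndicatorSpan_le (𝒜 : Finset (Finset α)) (t : ℕ) :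
    finrank ℚ (supersetIndicatorSpan 𝒜 t) ≤ (Fintype.card α).choose t := by
  refine (finrank_range_le_card (R := ℚ) fun D : powersetCard t (univ : Finset α) =>
    fun x : 𝒜 => supersetIndicator (D : Finset α) x).trans_eq ?_
  simp

theorem supersetIndicator_mem_supersetIndicatorSpan {𝒜 : Finset (Finset α)} {A : Finset α}
    {t k : ℕ} (h𝒜 : ∀ x ∈ 𝒜, #x = k) (hA : #A ≤ t) (htk : t ≤ k) :
    (fun x : 𝒜 => supersetIndicator A (x : Finset α)) ∈ supersetIndicatorSpan 𝒜 t := by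
  have hsum : (fun x : 𝒜 => supersetIndicator A (x : Finset α)) =
      ((k - #A).choose (t - #A) : ℚ)⁻¹ •
        ∑ D ∈ powersetCard t univ with A ⊆ D, fun x : 𝒜 => supersetIndicator D (x : Finset α) := by
    ext x
    simp [Finset.sum_apply, supersetIndicator_eq_inv_choose_mul_sum (h𝒜 x x.2) hA htk]
  rw [hsum]
  exact Submodule.smul_mem _ _
    (Submodule.sum_mem _ fun D hD => Submodule.subset_span ⟨⟨D, (mem_filter.1 hD).1⟩, rfl⟩)

def sunflowerTensor (x y z : Finset α) : ℚ :=
  ∏ i, ((if i ∈ x then 1 else 0) + (if i ∈ y then 1 else 0) + (if i ∈ z then 1 else 0) - 2)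

theorem sunflowerTensor_self_ne_zero (x : Finset α) : sunflowerTensor x x x ≠ 0 :=
  prod_ne_zero_iff.2 fun i _ => by split_ifs <;> norm_num

theorem inter_subset_of_sunflowerTensor_ne_zero {x y z : Finset α}
    (h : sunflowerTensor x y z ≠ 0) : x ∩ y ⊆ z ∧ x ∩ z ⊆ y ∧ y ∩ z ⊆ x := by
  rw [sunflowerTensor, prod_ne_zero_iff] at h
  refine ⟨fun i hi => ?_, fun i hi => ?_, fun i hi => ?_⟩ <;> rw [mem_inter] at hi <;>
    by_contra hi' <;> apply h i (mem_univ i) <;> simp only [hi.1, hi.2, hi', if_true, if_false] <;>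
    norm_num

theorem sunflowerTensor_eq_sum (x y z : Finset α) :
    sunflowerTensor x y z = ∑ c : α → Fin 4, supersetIndicator {i | c i = 0} x *
      supersetIndicator {i | c i = 1} y * supersetIndicator {i | c i = 2} z *
      (-2) ^ #{i | c i = 3} := by
  let e : α → Fin 4 → ℚ := fun i =>
    ![if i ∈ x then 1 else 0, if i ∈ y then 1 else 0, if i ∈ z then 1 else 0, -2]
  have he : sunflowerTensor x y z = ∏ i, ∑ j, e i j :=
    prod_congr rfl fun i _ => by
      simp only [Fin.sum_univ_four, Matrix.cons_val_zero, Matrix.cons_val_one, Matrix.cons_val, e]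
      ring
  rw [he, Fintype.prod_sum]
  refine sum_congr rfl fun c _ => ?_
  rw [← prod_fiberwise univ c fun i => e i (c i), Fin.prod_univ_four]
  have hfibre : ∀ j, ∏ i with c i = j, e i (c i) = ∏ i with c i = j, e i j :=
    fun j => prod_congr rfl fun i hi => by rw [(mem_filter.1 hi).2]
  simp only [hfibre, e, supersetIndicator, Matrix.cons_val, prod_boole, prod_const]
  rfl

theorem card_le_three_mul_choose_of_sunflowerFree {𝒜 : Finset (Finset α)} {k t : ℕ}
    (hα : Fintype.card α ≤ 3 * t + 2) (htk : t ≤ k) (h𝒜 : ∀ x ∈ 𝒜, #x = k)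
    (hsf : SunflowerFree 𝒜) : #𝒜 ≤ 3 * (Fintype.card α).choose t := by
  set W := supersetIndicatorSpan 𝒜 t
  have hind : ∀ A : Finset α, #A ≤ t → (fun x : 𝒜 => supersetIndicator A (x : Finset α)) ∈ W :=
    fun A hA => supersetIndicator_mem_supersetIndicatorSpan h𝒜 hA htk
  let P₁ (c : α → Fin 4) : Prop := #{i | c i = 0} ≤ t
  let P₂ (c : α → Fin 4) : Prop := #{i | c i = 1} ≤ t
  let w (c : α → Fin 4) : ℚ := (-2) ^ #{i | c i = 3}
  let T₁ (p : 𝒜 × 𝒜) : 𝒜 → ℚ := ∑ c with P₁ c,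
    (supersetIndicator {i | c i = 1} p.1 * supersetIndicator {i | c i = 2} p.2 * w c) •
      fun x : 𝒜 => supersetIndicator {i | c i = 0} (x : Finset α)
  let T₂ (p : 𝒜 × 𝒜) : 𝒜 → ℚ := ∑ c with ¬P₁ c ∧ P₂ c,
    (supersetIndicator {i | c i = 0} p.1 * supersetIndicator {i | c i = 2} p.2 * w c) •
      fun x : 𝒜 => supersetIndicator {i | c i = 1} (x : Finset α)
  let T₃ (p : 𝒜 × 𝒜) : 𝒜 → ℚ := ∑ c with ¬P₁ c ∧ ¬P₂ c,
    (supersetIndicator {i | c i = 0} p.1 * supersetIndicator {i | c i = 1} p.2 * w c) •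
      fun x : 𝒜 => supersetIndicator {i | c i = 2} (x : Finset α)
  have h₁ : ∀ p, T₁ p ∈ W := fun p =>
    Submodule.sum_mem _ fun c hc => Submodule.smul_mem _ _ (hind _ (mem_filter.1 hc).2)
  have h₂ : ∀ p, T₂ p ∈ W := fun p =>
    Submodule.sum_mem _ fun c hc => Submodule.smul_mem _ _ (hind _ (mem_filter.1 hc).2.2)
  have h₃ : ∀ p, T₃ p ∈ W := fun p => Submodule.sum_mem _ fun c hc => by
    have hfibres :=
      card_eq_sum_card_fiberwise (s := univ) (t := univ) (f := c) fun _ _ => mem_univ _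
    rw [card_univ, Fin.sum_univ_four] at hfibres
    exact Submodule.smul_mem _ _ (hind _ (by simp only [mem_filter, P₁, P₂] at hc; omega))
  have hT : ∀ x y z : 𝒜,
      sunflowerTensor (x : Finset α) y z = T₁ (y, z) x + T₂ (x, z) y + T₃ (x, y) z := by
    intro x y z
    rw [sunflowerTensor_eq_sum, ← sum_filter_add_sum_filter_not univ P₁,
      ← sum_filter_add_sum_filter_not {c | ¬P₁ c} P₂, filter_filter, filter_filter, ← add_assoc]
    simp only [T₁, T₂, T₃, w, Finset.sum_apply, Pi.smul_apply, smul_eq_mul]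
    refine congrArg₂ (· + ·) (congrArg₂ (· + ·) ?_ ?_) ?_ <;>
      exact sum_congr rfl fun c _ => by ring
  have hoff : ∀ x y z : 𝒜, ¬(x = y ∧ x = z) → sunflowerTensor (x : Finset α) y z = 0 := by
    intro x y z hne
    by_contra h
    obtain ⟨hxy, hxz⟩ := eq_and_eq_of_not_isSunflower3 ((h𝒜 x x.2).trans (h𝒜 y y.2).symm)
      ((h𝒜 x x.2).trans (h𝒜 z z.2).symm) (inter_subset_of_sunflowerTensor_ne_zero h)
      (hsf x x.2 y y.2 z z.2)
    exact hne ⟨Subtype.ext hxy, Subtype.ext hxz⟩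
  have hcard : Fintype.card 𝒜 ≤ finrank ℚ W + finrank ℚ W + finrank ℚ W :=
    card_le_of_slice_decomposition (K := ℚ) (α := 𝒜)
      (fun x y z => sunflowerTensor (x : Finset α) y z) (fun x => sunflowerTensor_self_ne_zero _)
      hoff W W W T₁ T₂ T₃ h₁ h₂ h₃ hT
  have hW : finrank ℚ W ≤ (Fintype.card α).choose t := finrank_supersetIndicatorSpan_le 𝒜 t
  rw [Fintype.card_coe] at hcard
  omega

end Sunflower

section Counting

variable {α : Type*} [DecidableEq α] [Fintype α]

theorem card_filter_card_le_le_sum_choose (m : ℕ) :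
    #{F : Finset α | #F ≤ m} ≤ ∑ i ∈ range (m + 1), (Fintype.card α).choose i :=
  calc #{F : Finset α | #F ≤ m}
      ≤ #((range (m + 1)).biUnion fun i => powersetCard i (univ : Finset α)) :=
        card_le_card fun F hF => by
          simp only [mem_filter, mem_univ, true_and, mem_biUnion, mem_range, mem_powersetCard,
            subset_univ, exists_eq_right'] at hF ⊢
          omega
    _ ≤ ∑ i ∈ range (m + 1), #(powersetCard i (univ : Finset α)) := card_biUnion_le
    _ = _ := by simp

theorem card_filter_le_card_le_sum_choose (m : ℕ) :
    #{F : Finset α | Fintype.card α - m ≤ #F} ≤ ∑ i ∈ range (m + 1), (Fintype.card α).choose i :=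
  calc #{F : Finset α | Fintype.card α - m ≤ #F} ≤ #{F : Finset α | #F ≤ m} :=
        card_le_card_of_injOn compl (fun F hF => by
          simp only [coe_filter, mem_univ, true_and, Set.mem_ofPred_eq, card_compl] at hF ⊢
          omega) compl_injective.injOn
    _ ≤ _ := card_filter_card_le_le_sum_choose m

end Counting

theorem stmt_1_general (n : ℕ)
    (𝓕 : Finset (Finset (Fin n)))
    (hsf : SunflowerFree 𝓕) :
    𝓕.card ≤ 3 * ((n + 2) / 3) * Nat.choose n (n / 3) +
      2 * ∑ i ∈ Finset.range ((n + 2) / 3 + 1), Nat.choose n i := by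
  set m := (n + 2) / 3
  let 𝓜 := 𝓕.filter fun F => m < #F ∧ #F < n - m
  have hcover :
      #𝓕 ≤ #{F : Finset (Fin n) | #F ≤ m} + #𝓜 + #{F : Finset (Fin n) | n - m ≤ #F} := by
    refine (card_le_card fun F hF => ?_).trans
      ((card_union_le _ _).trans (Nat.add_le_add_right (card_union_le _ _) _))
    simp only [mem_union, mem_filter, mem_univ, hF, true_and, 𝓜]
    omega
  have hmid : #𝓜 ≤ 3 * n.choose (n / 3) * m := by
    refine (card_le_mul_card_image (f := card) 𝓜 _ fun k hk => ?_).trans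
      (Nat.mul_le_mul_left _ ?_)
    · obtain ⟨F, hF, rfl⟩ := mem_image.1 hk
      have hFm := (mem_filter.1 hF).2
      simpa using card_le_three_mul_choose_of_sunflowerFree (α := Fin n) (t := n / 3)
        (by rw [Fintype.card_fin]; omega) (by omega) (fun G hG => (mem_filter.1 hG).2)
        (hsf.mono fun G hG => (mem_filter.1 (mem_filter.1 hG).1).1)
    · calc #(𝓜.image card) ≤ #(Ioo m (n - m)) := card_le_card fun k hk => by
            obtain ⟨F, hF, rfl⟩ := mem_image.1 hk
            simpa using (mem_filter.1 hF).2
        _ ≤ m := by rw [Nat.card_Ioo]; omega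
  have hlow := card_filter_card_le_le_sum_choose (α := Fin n) m
  have hhigh := card_filter_le_card_le_sum_choose (α := Fin n) m
  rw [Fintype.card_fin] at hlow hhigh
  linarith

theorem stmt_1 (n : ℕ) (hn : 0 < n)
    (𝓕 : Finset (Finset (Fin n)))
    (hsf : SunflowerFree 𝓕) :
    𝓕.card ≤ 3 * ((n + 2) / 3) * Nat.choose n (n / 3) +
      2 * ∑ i ∈ Finset.range ((n + 2) / 3 + 1), Nat.choose n i :=
  stmt_1_general n 𝓕 hsf
end

section
/- Let k ≥ 1 and t ≥ 2 be integers. If 𝓕 is a k-uniform family of finite sets with more than k!(t-1)^k·(1 - ∑_{s=1}^{k-1} s/((s+1)!·(t-1)^s)) members, then 𝓕 contains a sunflower with t petals, i.e., t pairwise distinct members F₁,...,F_t of 𝓕 such that Fᵢ ∩ Fⱼ = F₁ ∩ F₂ ∩ ... ∩ F_t for all 1 ≤ i < j ≤ t. -/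
open Finset

/-!
Write `N t k` for `sunflowerBound t k`. A `k`-uniform family with no sunflower of `t` petals
has at most `N t k` members, by induction on `k`. Take a maximal pairwise disjoint subfamily
`𝒮`: it has fewer than `t` members, since disjoint sets form a sunflower, and every member of
the family meets `Y = ⋃ 𝒮`, a set of at most `|𝒮| (k + 1)` points. For every point `y`, the sets
through `y`, with `y` removed, form a `k`-uniform family without sunflowers, so `y` has degree
at most `N t k`. Counting incidences between `Y` and the family, each member of `𝒮` meets `Y`
in `k + 1` points and every other member in at least one, so `|𝓕| + k |𝒮| ≤ |𝒮| (k + 1) N t k`,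
which gives `|𝓕| ≤ (t - 1) ((k + 1) N t k - k) = N t (k + 1)`. Unfolding the recursion yields
the closed form.
-/

def sunflowerBound (t : ℕ) : ℕ → ℕ
  | 0 => 1
  | k + 1 => (t - 1) * ((k + 1) * sunflowerBound t k - k)

lemma sunflowerBound_pos {t : ℕ} (ht : 2 ≤ t) : ∀ k, 0 < sunflowerBound t k
  | 0 => Nat.one_pos
  | k + 1 => by
    have hk : k + 1 ≤ (k + 1) * sunflowerBound t k :=
      Nat.le_mul_of_pos_right _ (sunflowerBound_pos ht k)
    exact Nat.mul_pos (by omega) (by omega)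

lemma sunflowerBound_succ_cast {t : ℕ} (ht : 2 ≤ t) (k : ℕ) :
    (sunflowerBound t (k + 1) : ℝ) = ((t : ℝ) - 1) * ((k + 1) * sunflowerBound t k - k) := by
  have hk : k ≤ (k + 1) * sunflowerBound t k :=
    (Nat.le_succ k).trans (Nat.le_mul_of_pos_right _ (sunflowerBound_pos ht k))
  rw [sunflowerBound, Nat.cast_mul, Nat.cast_sub hk, Nat.cast_sub (by omega : 1 ≤ t)]
  push_cast
  ring

lemma sunflowerBound_eq {t : ℕ} (ht : 2 ≤ t) (k : ℕ) :
    (sunflowerBound t k : ℝ) =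
      (Nat.factorial k : ℝ) * ((t : ℝ) - 1) ^ k *
        (1 - ∑ s ∈ Finset.Icc 1 (k - 1),
          (s : ℝ) / ((Nat.factorial (s + 1) : ℝ) * ((t : ℝ) - 1) ^ s)) := by
  induction k with
  | zero => simp [sunflowerBound]
  | succ k ih =>
    rw [sunflowerBound_succ_cast ht, ih]
    rcases k with _ | m
    · simp
    · have hT : (t : ℝ) - 1 ≠ 0 := by
        have : (2 : ℝ) ≤ t := by exact_mod_cast ht
        linarith
      rw [Nat.add_sub_cancel, Nat.add_sub_cancel, sum_Icc_succ_top (by omega),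
        Nat.factorial_succ (m + 1)]
      push_cast
      field_simp
      ring

lemma inf'_univ_eq_of_inf_eq {ι β : Type*} [Fintype ι] [SemilatticeInf β] {f : ι → β} {c : β}
    (hc : ∀ i j, i ≠ j → f i ⊓ f j = c) {i j : ι} (hij : i ≠ j) :
    univ.inf' ⟨i, mem_univ i⟩ f = c := by
  refine le_antisymm ?_ (Finset.le_inf' _ _ fun m _ => ?_)
  · rw [← hc i j hij]
    exact le_inf (inf'_le _ (mem_univ i)) (inf'_le _ (mem_univ j))
  · by_cases hmi : m = i
    · rw [hmi, ← hc i j hij]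
      exact inf_le_left
    · rw [← hc m i hmi]
      exact inf_le_left

namespace Finset

variable {α : Type*} [DecidableEq α]

lemma card_memberSubfamily (a : α) (𝒜 : Finset (Finset α)) :
    #(𝒜.memberSubfamily a) = #{s ∈ 𝒜 | a ∈ s} :=
  card_image_of_injOn <| (erase_injOn' a).mono fun _ hs => (mem_filter.1 hs).2

lemma card_eq_of_mem_memberSubfamily {𝒜 : Finset (Finset α)} {a : α} {k : ℕ}
    (h𝒜 : ∀ s ∈ 𝒜, #s = k + 1) {s : Finset α} (hs : s ∈ 𝒜.memberSubfamily a) : #s = k := by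
  obtain ⟨hins, ha⟩ := mem_memberSubfamily.1 hs
  have := h𝒜 _ hins
  rw [card_insert_of_notMem ha] at this
  omega

lemma exists_subset_pairwiseDisjoint_maximal (𝒜 : Finset (Finset α)) :
    ∃ 𝒮 ⊆ 𝒜, (𝒮 : Set (Finset α)).PairwiseDisjoint id ∧
      ∀ s ∈ 𝒜, Disjoint (𝒮.biUnion id) s → s = ∅ := by
  classical
  have hne : (𝒜.powerset.filter fun 𝒮 : Finset (Finset α) =>
      (𝒮 : Set (Finset α)).PairwiseDisjoint id).Nonempty := ⟨∅, by simp⟩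
  obtain ⟨𝒮, h𝒮, hmax⟩ := exists_maximal hne
  simp only [mem_filter, mem_powerset] at h𝒮 hmax
  refine ⟨𝒮, h𝒮.1, h𝒮.2, fun s hs hdisj => ?_⟩
  have hins : insert s 𝒮 ⊆ 𝒮 := by
    refine hmax ⟨insert_subset hs h𝒮.1, ?_⟩ (subset_insert s 𝒮)
    rw [coe_insert]
    exact h𝒮.2.insert fun u hu _ =>
      (hdisj.mono_left (subset_biUnion_of_mem id (mem_coe.1 hu))).symm
  have hsY : s ⊆ 𝒮.biUnion id := subset_biUnion_of_mem id (hins (mem_insert_self s 𝒮))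
  exact disjoint_self.1 (hdisj.mono_left hsY)

lemma card_add_mul_card_le {𝒜 𝒮 : Finset (Finset α)} {k D : ℕ} (h𝒜 : ∀ s ∈ 𝒜, #s = k + 1)
    (h𝒮 : 𝒮 ⊆ 𝒜) (hmeet : ∀ s ∈ 𝒜, ¬Disjoint (𝒮.biUnion id) s)
    (hdeg : ∀ a, #{s ∈ 𝒜 | a ∈ s} ≤ D) :
    #𝒜 + k * #𝒮 ≤ #𝒮 * (k + 1) * D := by
  set Y := 𝒮.biUnion id
  have hin : ∑ s ∈ 𝒮, #(Y ∩ s) = #𝒮 * (k + 1) := by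
    have hcard : ∀ s ∈ 𝒮, #(Y ∩ s) = k + 1 := fun s hs => by
      have hsY : s ⊆ Y := subset_biUnion_of_mem id hs
      rw [inter_eq_right.2 hsY, h𝒜 s (h𝒮 hs)]
    rw [sum_congr rfl hcard, sum_const, smul_eq_mul]
  have hout : #(𝒜 \ 𝒮) ≤ ∑ s ∈ 𝒜 \ 𝒮, #(Y ∩ s) := by
    simpa using card_nsmul_le_sum (𝒜 \ 𝒮) (fun s => #(Y ∩ s)) 1 fun s hs =>
      card_pos.2 (not_disjoint_iff_nonempty_inter.1 (hmeet s (mem_sdiff.1 hs).1))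
  have hY : #Y ≤ #𝒮 * (k + 1) :=
    card_biUnion_le_card_mul _ _ _ fun s hs => (h𝒜 s (h𝒮 hs)).le
  calc #𝒜 + k * #𝒮 = #(𝒜 \ 𝒮) + #𝒮 * (k + 1) := by
        have := card_le_card h𝒮
        rw [card_sdiff_of_subset h𝒮, mul_add, mul_one, mul_comm]
        omega
    _ ≤ ∑ s ∈ 𝒜, #(Y ∩ s) := by rw [← sum_sdiff h𝒮, hin]; gcongr
    _ ≤ #Y * D := sum_card_inter_le fun a _ => hdeg a
    _ ≤ #𝒮 * (k + 1) * D := Nat.mul_le_mul_right D hY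


end Finset

section Sunflower

variable {α : Type*} [DecidableEq α]

def HasSunflower (𝒜 : Finset (Finset α)) (t : ℕ) : Prop :=
  ∃ f : Fin t → Finset α, Function.Injective f ∧ (∀ i, f i ∈ 𝒜) ∧
    ∃ c, ∀ i j, i ≠ j → f i ∩ f j = c

lemma HasSunflower.mono {𝒜 ℬ : Finset (Finset α)} {t : ℕ} (h : 𝒜 ⊆ ℬ) :
    HasSunflower 𝒜 t → HasSunflower ℬ t
  | ⟨f, hf, hmem, c, hc⟩ => ⟨f, hf, fun i => h (hmem i), c, hc⟩

lemma hasSunflower_of_pairwiseDisjoint {𝒜 : Finset (Finset α)} {t : ℕ}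
    (h𝒜 : (𝒜 : Set (Finset α)).PairwiseDisjoint id) (ht : t ≤ #𝒜) : HasSunflower 𝒜 t := by
  obtain ⟨e⟩ : Nonempty (Fin t ↪ 𝒜) := Function.Embedding.nonempty_of_card_le (by simpa using ht)
  refine ⟨fun i => e i, Subtype.val_injective.comp e.injective, fun i => (e i).2, ∅,
    fun i j hij => ?_⟩
  exact disjoint_iff_inter_eq_empty.1
    (h𝒜 (e i).2 (e j).2 fun h => hij (e.injective (Subtype.ext h)))

lemma HasSunflower.of_memberSubfamily {𝒜 : Finset (Finset α)} {t : ℕ} (a : α) :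
    HasSunflower (𝒜.memberSubfamily a) t → HasSunflower 𝒜 t := by
  rintro ⟨f, hf, hmem, c, hc⟩
  have hmem' i := mem_memberSubfamily.1 (hmem i)
  refine ⟨fun i => insert a (f i), fun i j hij => hf ?_, fun i => (hmem' i).1, insert a c,
    fun i j hij => ?_⟩
  · simpa [erase_insert (hmem' i).2, erase_insert (hmem' j).2] using congrArg (erase · a) hij
  · rw [← insert_inter_distrib, hc i j hij]

theorem card_le_sunflowerBound {t : ℕ} :
    ∀ {k : ℕ} {𝒜 : Finset (Finset α)}, (∀ s ∈ 𝒜, #s = k) → ¬HasSunflower 𝒜 t →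
      #𝒜 ≤ sunflowerBound t k
  | 0, 𝒜, h𝒜, _ => card_le_one.2 fun s hs u hu => by
      rw [card_eq_zero.1 (h𝒜 s hs), card_eq_zero.1 (h𝒜 u hu)]
  | k + 1, 𝒜, h𝒜, hfree => by
    obtain ⟨𝒮, h𝒮𝒜, h𝒮disj, h𝒮max⟩ := exists_subset_pairwiseDisjoint_maximal 𝒜
    have h𝒮t : #𝒮 ≤ t - 1 := by
      have := mt (hasSunflower_of_pairwiseDisjoint (t := t) h𝒮disj) fun h => hfree (h.mono h𝒮𝒜)
      omega
    have hmeet : ∀ s ∈ 𝒜, ¬Disjoint (𝒮.biUnion id) s := fun s hs hdisj => by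
      simpa [h𝒮max s hs hdisj] using h𝒜 s hs
    have hdeg : ∀ a, #{s ∈ 𝒜 | a ∈ s} ≤ sunflowerBound t k := fun a => by
      rw [← card_memberSubfamily]
      exact card_le_sunflowerBound (fun s hs => card_eq_of_mem_memberSubfamily h𝒜 hs)
        fun h => hfree (h.of_memberSubfamily a)
    have hcount := card_add_mul_card_le h𝒜 h𝒮𝒜 hmeet hdeg
    calc #𝒜 ≤ #𝒮 * ((k + 1) * sunflowerBound t k - k) := by
          rw [Nat.mul_sub, ← mul_assoc, mul_comm _ k]
          omega
      _ ≤ (t - 1) * ((k + 1) * sunflowerBound t k - k) := Nat.mul_le_mul_right _ h𝒮t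

end Sunflower

theorem stmt_3 {α : Type*} [DecidableEq α] (k t : ℕ) (ht : 2 ≤ t)
    (𝓕 : Finset (Finset α))
    (huniform : ∀ F ∈ 𝓕, F.card = k)
    (hcard : (𝓕.card : ℝ) >
      (Nat.factorial k : ℝ) * ((t : ℝ) - 1) ^ k *
        (1 - ∑ s ∈ Finset.Icc 1 (k - 1),
          (s : ℝ) / ((Nat.factorial (s + 1) : ℝ) * ((t : ℝ) - 1) ^ s))) :
    ∃ f : Fin t → Finset α, Function.Injective f ∧ (∀ i, f i ∈ 𝓕) ∧
      ∀ i j : Fin t, i ≠ j →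
        f i ∩ f j = Finset.univ.inf' (Finset.univ_nonempty_iff.mpr ⟨⟨0, by omega⟩⟩) f := by
  rw [← sunflowerBound_eq ht] at hcard
  have hbound : sunflowerBound t k < #𝓕 := by exact_mod_cast hcard
  obtain ⟨f, hf, hmem, c, hc⟩ : HasSunflower 𝓕 t := by
    by_contra hfree
    exact (card_le_sunflowerBound huniform hfree).not_gt hbound
  refine ⟨f, hf, hmem, fun i j hij => ?_⟩
  rw [hc i j hij, inf'_univ_eq_of_inf_eq hc hij]
end

section
/- Define F(n,3) to be the largest size of a family 𝓕 of subsets of [n] = {1,2,...,n} that contains no sunflower with 3 petals. Then limsup_{n → ∞} F(n,3)^{1/n} ≤ 3/2^{2/3}. -/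
open Finset Module Filter

namespace SFaux

section
variable {n : ℕ}

def χ (s : Finset (Fin n)) (i : Fin n) : ℚ := if i ∈ s then 1 else 0

def ee (S a : Finset (Fin n)) : ℚ := if S ⊆ a then 1 else 0

def TT (a b c : Finset (Fin n)) : ℚ := ∏ i, (2 - χ a i - χ b i - χ c i)

def P (j : Fin 4) (g : Fin n → Fin 4) : Finset (Fin n) := Finset.univ.filter (fun i => g i = j)

def κ (g : Fin n → Fin 4) : ℚ :=
  2 ^ (P 0 g).card * (-1 : ℚ) ^ ((P 1 g).card + (P 2 g).card + (P 3 g).card)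

lemma prod_chi (S a : Finset (Fin n)) : (∏ i ∈ S, χ a i) = ee S a := by
  by_cases h : S ⊆ a
  · rw [ee, if_pos h]
    apply Finset.prod_eq_one
    intro i hi
    simp [χ, h hi]
  · rw [ee, if_neg h]
    obtain ⟨i, hiS, hia⟩ := not_subset.mp h
    exact Finset.prod_eq_zero hiS (by simp [χ, hia])

lemma prod_neg_chi (S d : Finset (Fin n)) :
    (∏ i ∈ S, -χ d i) = (-1 : ℚ) ^ S.card * ee S d := by
  rw [← prod_chi, ← Finset.prod_const, ← Finset.prod_mul_distrib]
  exact Finset.prod_congr rfl fun i _ => by ring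

lemma TT_expand (a b c : Finset (Fin n)) :
    TT a b c = ∑ g : Fin n → Fin 4,
      κ g * (ee (P 1 g) a * (ee (P 2 g) b * ee (P 3 g) c)) := by
  have step1 : ∀ i : Fin n, (2 - χ a i - χ b i - χ c i)
      = ∑ j : Fin 4, ![(2:ℚ), -χ a i, -χ b i, -χ c i] j := by
    intro i
    simp [Fin.sum_univ_four]
    ring
  rw [TT]
  simp_rw [step1]
  rw [Fintype.prod_sum]
  apply Finset.sum_congr rfl
  intro g _
  rw [← Finset.prod_fiberwise univ g (fun i => ![(2:ℚ), -χ a i, -χ b i, -χ c i] (g i))]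
  have fib : ∀ j : Fin 4, (∏ i ∈ univ.filter (fun i => g i = j),
      ![(2:ℚ), -χ a i, -χ b i, -χ c i] (g i))
      = ∏ i ∈ P j g, ![(2:ℚ), -χ a i, -χ b i, -χ c i] j := by
    intro j
    apply Finset.prod_congr rfl
    intro i hi
    rw [(mem_filter.mp hi).2]
  rw [Fin.prod_univ_four]
  simp only [fib]
  have h0 : (∏ i ∈ P 0 g, ![(2:ℚ), -χ a i, -χ b i, -χ c i] 0) = 2 ^ (P 0 g).card :=
    by simp [Finset.prod_const]
  have h1 : (∏ i ∈ P 1 g, ![(2:ℚ), -χ a i, -χ b i, -χ c i] 1)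
      = (-1 : ℚ) ^ (P 1 g).card * ee (P 1 g) a := by
    show (∏ i ∈ P 1 g, -χ a i) = _
    exact prod_neg_chi _ _
  have h2 : (∏ i ∈ P 2 g, ![(2:ℚ), -χ a i, -χ b i, -χ c i] 2)
      = (-1 : ℚ) ^ (P 2 g).card * ee (P 2 g) b := by
    show (∏ i ∈ P 2 g, -χ b i) = _
    exact prod_neg_chi _ _
  have h3 : (∏ i ∈ P 3 g, ![(2:ℚ), -χ a i, -χ b i, -χ c i] 3)
      = (-1 : ℚ) ^ (P 3 g).card * ee (P 3 g) c := by
    show (∏ i ∈ P 3 g, -χ c i) = _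
    exact prod_neg_chi _ _
  rw [h0, h1, h2, h3, κ]
  ring


lemma TT_diag_ne_zero (a : Finset (Fin n)) : TT a a a ≠ 0 := by
  rw [TT, Finset.prod_ne_zero_iff]
  intro i _
  by_cases h : i ∈ a <;> simp [χ, h] <;> norm_num

lemma TT_eq_zero_of_two {a b c : Finset (Fin n)} (i : Fin n)
    (h : χ a i + χ b i + χ c i = 2) : TT a b c = 0 :=
  Finset.prod_eq_zero (mem_univ i) (by linarith)

lemma TT_offdiag {𝓕 : Finset (Finset (Fin n))} (hS : SunflowerFree 𝓕) {k : ℕ}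
    {a b c : Finset (Fin n)} (ha : a ∈ 𝓕) (hb : b ∈ 𝓕) (hc : c ∈ 𝓕)
    (hak : a.card = k) (hbk : b.card = k) (hck : c.card = k)
    (hne : ¬(a = b ∧ a = c)) : TT a b c = 0 := by
  by_cases hab : a = b
  · subst hab
    have hac : a ≠ c := fun h => hne ⟨rfl, h⟩
    have : ¬ a ⊆ c := fun hsub =>
      hac (Finset.eq_of_subset_of_card_le hsub (by omega))
    obtain ⟨i, hia, hic⟩ := not_subset.mp this
    exact TT_eq_zero_of_two i (by simp [χ, hia, hic]; norm_num)
  by_cases hac : a = c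
  · subst hac
    have : ¬ a ⊆ b := fun hsub =>
      hab (Finset.eq_of_subset_of_card_le hsub (by omega))
    obtain ⟨i, hia, hib⟩ := not_subset.mp this
    exact TT_eq_zero_of_two i (by simp [χ, hia, hib]; norm_num)
  by_cases hbc : b = c
  · subst hbc
    have : ¬ b ⊆ a := fun hsub =>
      hab (Finset.eq_of_subset_of_card_le hsub (by omega)).symm
    obtain ⟨i, hib, hia⟩ := not_subset.mp this
    exact TT_eq_zero_of_two i (by simp [χ, hia, hib]; norm_num)
  · have hsf := hS a ha b hb c hc
    rw [IsSunflower3] at hsf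
    push_neg at hsf
    have h3 := hsf hab hac hbc
    -- one of the intersection equalities fails
    rcases (by tauto : a ∩ b ≠ a ∩ b ∩ c ∨ a ∩ c ≠ a ∩ b ∩ c ∨ b ∩ c ≠ a ∩ b ∩ c) with h | h | h
    · have hsub : a ∩ b ∩ c ⊆ a ∩ b := Finset.inter_subset_left
      obtain ⟨i, hi1, hi2⟩ := Finset.exists_of_ssubset (hsub.ssubset_of_ne (Ne.symm h))
      simp only [mem_inter] at hi1 hi2
      have hx : i ∉ c := by tauto
      exact TT_eq_zero_of_two i (by simp [χ, hi1.1, hi1.2, hx]; norm_num)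
    · have hsub : a ∩ b ∩ c ⊆ a ∩ c := by
        intro i hi; simp only [mem_inter] at hi ⊢; tauto
      obtain ⟨i, hi1, hi2⟩ := Finset.exists_of_ssubset (hsub.ssubset_of_ne (Ne.symm h))
      simp only [mem_inter] at hi1 hi2
      have hx : i ∉ b := by tauto
      exact TT_eq_zero_of_two i (by simp [χ, hi1.1, hi1.2, hx]; norm_num)
    · have hsub : a ∩ b ∩ c ⊆ b ∩ c := by
        intro i hi; simp only [mem_inter] at hi ⊢; tauto
      obtain ⟨i, hi1, hi2⟩ := Finset.exists_of_ssubset (hsub.ssubset_of_ne (Ne.symm h))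
      simp only [mem_inter] at hi1 hi2
      have hx : i ∉ a := by tauto
      exact TT_eq_zero_of_two i (by simp [χ, hi1.1, hi1.2, hx]; norm_num)


/-- a subspace of `ι → ℚ` contains a vector whose support has size at least the dimension -/
lemma exists_max_support {ι : Type*} [Fintype ι] [DecidableEq ι] (W : Submodule ℚ (ι → ℚ)) :
    ∃ h ∈ W, finrank ℚ W ≤ (univ.filter fun i => h i ≠ 0).card := by
  classical
  set supp : (ι → ℚ) → Finset ι := fun h => univ.filter fun i => h i ≠ 0 with hsupp
  set N : Set ℕ := (fun h => (supp h).card) '' (W : Set (ι → ℚ)) with hN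
  have hNne : N.Nonempty := ⟨(supp 0).card, ⟨0, W.zero_mem, rfl⟩⟩
  have hNbdd : BddAbove N := by
    refine ⟨Fintype.card ι, ?_⟩
    rintro x ⟨h, _, rfl⟩
    exact (Finset.card_filter_le _ _).trans (by simp)
  obtain ⟨h₀, h₀W, h₀card⟩ := Nat.sSup_mem hNne hNbdd
  refine ⟨h₀, h₀W, ?_⟩
  -- every g in W has support inside supp h₀
  have hmax : ∀ g ∈ W, (supp g).card ≤ (supp h₀).card := by
    intro g hg
    exact (le_csSup hNbdd ⟨g, hg, rfl⟩).trans_eq h₀card.symm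
  have hsub : ∀ g ∈ W, supp g ⊆ supp h₀ := by
    intro g hg
    by_contra hcon
    obtain ⟨i, hig, hih⟩ := not_subset.mp hcon
    simp only [hsupp, mem_filter, mem_univ, true_and, not_not] at hig hih
    -- choose c avoiding bad values
    obtain ⟨c, hc⟩ := Infinite.exists_notMem_finset
      (insert (0:ℚ) ((supp h₀).image fun j => -h₀ j / g j))
    have hc0 : c ≠ 0 := fun h => hc (by simp [h])
    have hmem : h₀ + c • g ∈ W := W.add_mem h₀W (W.smul_mem c hg)
    have hsupset : insert i (supp h₀) ⊆ supp (h₀ + c • g) := by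
      intro j hj
      rcases Finset.mem_insert.mp hj with rfl | hj
      · simp only [hsupp, mem_filter, mem_univ, true_and]
        simp [hih, hc0, hig]
      · simp only [hsupp, mem_filter, mem_univ, true_and] at hj ⊢
        intro hzero
        by_cases hgj : g j = 0
        · exact hj (by simpa [hgj] using hzero)
        · apply hc
          refine Finset.mem_insert.mpr (Or.inr ?_)
          refine Finset.mem_image.mpr ⟨j, by simp [hsupp, hj], ?_⟩
          field_simp
          simp only [Pi.add_apply, Pi.smul_apply, smul_eq_mul] at hzero
          linarith [hzero]
    have : (supp h₀).card + 1 ≤ (supp (h₀ + c • g)).card := by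
      calc (supp h₀).card + 1 = (insert i (supp h₀)).card := by
            rw [Finset.card_insert_of_notMem (by simp [hsupp, hih])]
          _ ≤ _ := Finset.card_le_card hsupset
    have := hmax _ hmem
    omega
  -- W injects into functions on supp h₀
  have hker : ∀ x : ↥W, ((LinearMap.funLeft ℚ ℚ (Subtype.val : ↥(supp h₀) → ι)).comp
      W.subtype) x = 0 → x = 0 := by
    rintro ⟨g, hg⟩ hz
    have hzz : ∀ j : ↥(supp h₀), g j = 0 := fun j => congrFun hz j
    apply Subtype.ext
    funext j
    show g j = (0 : ι → ℚ) j
    simp only [Pi.zero_apply]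
    by_cases hj : j ∈ supp h₀
    · exact hzz ⟨j, hj⟩
    · by_contra hne
      exact hj (hsub g hg (by simp only [hsupp, mem_filter, mem_univ, true_and]; exact hne))
  have hinj : Function.Injective
      ((LinearMap.funLeft ℚ ℚ (Subtype.val : ↥(supp h₀) → ι)).comp W.subtype) :=
    LinearMap.ker_eq_bot.mp (LinearMap.ker_eq_bot'.mpr hker)
  have := LinearMap.finrank_le_finrank_of_injective hinj
  simpa using this


end

section
variable {n : ℕ}

def Sm (n : ℕ) : Finset (Finset (Fin n)) := univ.filter fun S => 3 * S.card ≤ n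

lemma exists_good_h (A : Finset (Finset (Fin n))) :
    ∃ h : ↥A → ℚ, (∀ S : Finset (Fin n), 3 * S.card ≤ n → ∑ a : ↥A, h a * ee S ↑a = 0) ∧
      A.card ≤ (Sm n).card + (univ.filter fun a : ↥A => h a ≠ 0).card := by
  classical
  let φ : (↥A → ℚ) →ₗ[ℚ] (↥(Sm n) → ℚ) :=
    { toFun := fun h S => ∑ a : ↥A, h a * ee (n := n) ↑S ↑a
      map_add' := by
        intro x y; funext S; simp [add_mul, Finset.sum_add_distrib]
      map_smul' := by
        intro c x; funext S; simp [Finset.mul_sum, mul_assoc] }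
  obtain ⟨h, hW, hcard⟩ := exists_max_support (LinearMap.ker φ)
  refine ⟨h, ?_, ?_⟩
  · intro S hS
    have hmem : S ∈ Sm n := by simp [Sm, hS]
    have := LinearMap.mem_ker.mp hW
    exact congrFun this ⟨S, hmem⟩
  · have hrn := LinearMap.finrank_range_add_finrank_ker φ
    have h1 : finrank ℚ (↥A → ℚ) = A.card := by
      rw [Module.finrank_fintype_fun_eq_card, Fintype.card_coe]
    have h2 : finrank ℚ (LinearMap.range φ) ≤ (Sm n).card := by
      have := Submodule.finrank_le (LinearMap.range φ)
      rwa [Module.finrank_fintype_fun_eq_card, Fintype.card_coe] at this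
    omega


lemma P_cards (g : Fin n → Fin 4) :
    (P 1 g).card + (P 2 g).card + (P 3 g).card ≤ n := by
  classical
  have hd12 : Disjoint (P 1 g) (P 2 g) := by
    rw [Finset.disjoint_left]
    intro i h1 h2
    simp only [P, mem_filter] at h1 h2
    rw [h1.2] at h2; exact absurd h2.2 (by decide)
  have hd13 : Disjoint (P 1 g ∪ P 2 g) (P 3 g) := by
    rw [Finset.disjoint_left]
    intro i h1 h3
    simp only [P, mem_filter, mem_union] at h1 h3
    rcases h1 with h | h <;> (rw [h.2] at h3; exact absurd h3.2 (by decide))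
  calc (P 1 g).card + (P 2 g).card + (P 3 g).card
      = (P 1 g ∪ P 2 g ∪ P 3 g).card := by
        rw [card_union_of_disjoint hd13, card_union_of_disjoint hd12]
    _ ≤ (univ : Finset (Fin n)).card := card_le_card (subset_univ _)
    _ = n := by simp

lemma matrix_rank_add_le {m : Type*} [Fintype m] [DecidableEq m]
    (A B : Matrix m m ℚ) : (A + B).rank ≤ A.rank + B.rank := by
  unfold Matrix.rank
  rw [Matrix.mulVecLin_add]
  have hle : LinearMap.range (A.mulVecLin + B.mulVecLin)
      ≤ LinearMap.range A.mulVecLin ⊔ LinearMap.range B.mulVecLin := by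
    rintro y ⟨x, rfl⟩
    exact Submodule.add_mem_sup (LinearMap.mem_range_self _ x) (LinearMap.mem_range_self _ x)
  exact (Submodule.finrank_mono hle).trans
    (Submodule.finrank_add_le_finrank_add_finrank _ _)

lemma layer_bound {k : ℕ} (A : Finset (Finset (Fin n))) (hA : SunflowerFree A)
    (hk : ∀ a ∈ A, a.card = k) : A.card ≤ 3 * (Sm n).card := by
  classical
  obtain ⟨h, hortho, hcard⟩ := exists_good_h A
  set d : ↥A → ℚ := fun a => h a * TT (n := n) ↑a ↑a ↑a with hd
  set M : Matrix ↥A ↥A ℚ := Matrix.of fun b c => ∑ a : ↥A, h a * TT (n := n) ↑a ↑b ↑c with hM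
  -- M is diagonal
  have hdiag : M = Matrix.diagonal d := by
    ext b c
    by_cases hbc : b = c
    · subst hbc
      rw [Matrix.diagonal_apply_eq]
      show (∑ a : ↥A, h a * TT (n := n) ↑a ↑b ↑b) = h b * TT (n := n) ↑b ↑b ↑b
      apply Finset.sum_eq_single b
      · intro a _ hab
        have : ¬((a:Finset (Fin n)) = ↑b ∧ (a:Finset (Fin n)) = ↑b) := by
          intro ⟨h1, _⟩; exact hab (Subtype.ext h1)
        rw [TT_offdiag hA a.2 b.2 b.2 (hk _ a.2) (hk _ b.2) (hk _ b.2) this, mul_zero]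
      · intro hb; exact absurd (mem_univ b) hb
    · rw [Matrix.diagonal_apply_ne _ hbc]
      show (∑ a : ↥A, h a * TT (n := n) ↑a ↑b ↑c) = 0
      apply Finset.sum_eq_zero
      intro a _
      have : ¬((a:Finset (Fin n)) = ↑b ∧ (a:Finset (Fin n)) = ↑c) := by
        intro ⟨h1, h2⟩; exact hbc (Subtype.ext (h1 ▸ h2 : (b:Finset (Fin n)) = ↑c))
      rw [TT_offdiag hA a.2 b.2 c.2 (hk _ a.2) (hk _ b.2) (hk _ c.2) this, mul_zero]
  -- rank of M is the support size of h
  have hrank1 : (univ.filter fun a : ↥A => h a ≠ 0).card ≤ M.rank := by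
    rw [hdiag, Matrix.rank_diagonal, Fintype.card_subtype]
    apply le_of_eq
    congr 1
    apply Finset.filter_congr
    intro a _
    simp only [ne_eq, hd, mul_eq_zero, not_or]
    exact ⟨fun ha => ⟨ha, TT_diag_ne_zero _⟩, fun hp => hp.1⟩
  -- expansion of M into monomials
  set L : (Fin n → Fin 4) → ℚ := fun g => ∑ a : ↥A, h a * ee (P 1 g) ↑a with hL
  set q : (Fin n → Fin 4) → ℚ := fun g => L g * κ g with hq
  have hMg : ∀ b c : ↥A, M b c
      = ∑ g : Fin n → Fin 4, q g * (ee (P 2 g) ↑b * ee (P 3 g) ↑c) := by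
    intro b c
    show (∑ a : ↥A, h a * TT (n := n) ↑a ↑b ↑c) = _
    have hterm : ∀ a : ↥A, h a * TT (n := n) ↑a ↑b ↑c
        = ∑ g : Fin n → Fin 4,
            h a * ee (P 1 g) ↑a * κ g * (ee (P 2 g) ↑b * ee (P 3 g) ↑c) := by
      intro a
      rw [TT_expand, Finset.mul_sum]
      exact Finset.sum_congr rfl fun g _ => by ring
    simp_rw [hterm]
    rw [Finset.sum_comm]
    apply Finset.sum_congr rfl
    intro g _
    simp only [hq, hL]
    rw [← Finset.sum_mul, ← Finset.sum_mul]
  have hq0 : ∀ g, 3 * (P 1 g).card ≤ n → q g = 0 := by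
    intro g hg
    simp only [hq, hL, hortho _ hg, zero_mul]
  set G2 : Finset (Fin n → Fin 4) :=
    univ.filter (fun g => ¬(3 * (P 1 g).card ≤ n) ∧ 3 * (P 2 g).card ≤ n) with hG2
  set G3 : Finset (Fin n → Fin 4) :=
    univ.filter (fun g => ¬(3 * (P 1 g).card ≤ n) ∧ ¬(3 * (P 2 g).card ≤ n)) with hG3
  set M2 : Matrix ↥A ↥A ℚ :=
    Matrix.of (fun b c => ∑ g ∈ G2, q g * (ee (P 2 g) ↑b * ee (P 3 g) ↑c)) with hM2
  set M3 : Matrix ↥A ↥A ℚ :=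
    Matrix.of (fun b c => ∑ g ∈ G3, q g * (ee (P 2 g) ↑b * ee (P 3 g) ↑c)) with hM3
  have hMeq : M = M2 + M3 := by
    ext b c
    rw [Matrix.add_apply, hMg b c]
    simp only [hM2, hM3, Matrix.of_apply]
    rw [← Finset.sum_filter_add_sum_filter_not univ (fun g => 3 * (P 1 g).card ≤ n)
      (fun g => q g * (ee (P 2 g) ↑b * ee (P 3 g) ↑c))]
    rw [Finset.sum_eq_zero (fun g hg => by
      rw [hq0 g (Finset.mem_filter.mp hg).2, zero_mul]), zero_add]
    rw [← Finset.sum_filter_add_sum_filter_not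
      (univ.filter fun g => ¬(3 * (P 1 g).card ≤ n)) (fun g => 3 * (P 2 g).card ≤ n)
      (fun g => q g * (ee (P 2 g) ↑b * ee (P 3 g) ↑c))]
    rw [Finset.filter_filter, Finset.filter_filter]
  -- factor M2
  set N2 : Matrix ↥A ↥(Sm n) ℚ := Matrix.of (fun b S => ee (n := n) ↑S ↑b) with hN2
  set P2m : Matrix ↥(Sm n) ↥A ℚ := Matrix.of (fun S c =>
    ∑ g ∈ G2.filter (fun g => P 2 g = ↑S), q g * ee (P 3 g) ↑c) with hP2m
  have hfact2 : M2 = N2 * P2m := by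
    ext b c
    rw [Matrix.mul_apply]
    calc M2 b c = ∑ g ∈ G2, q g * (ee (P 2 g) ↑b * ee (P 3 g) ↑c) := rfl
      _ = ∑ S ∈ Sm n, ∑ g ∈ G2.filter (fun g => P 2 g = S),
            q g * (ee (P 2 g) ↑b * ee (P 3 g) ↑c) :=
          (Finset.sum_fiberwise_of_maps_to (fun g hg => by
            simp only [Sm, mem_filter, mem_univ, true_and]
            exact ((Finset.mem_filter.mp hg).2).2) _).symm
      _ = ∑ S ∈ Sm n, (fun S' : Finset (Fin n) => ee (n := n) S' ↑b *
            ∑ g ∈ G2.filter (fun g => P 2 g = S'), q g * ee (P 3 g) ↑c) S := by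
          apply Finset.sum_congr rfl
          intro S _
          simp only
          rw [Finset.mul_sum]
          apply Finset.sum_congr rfl
          intro g hg
          rw [← (Finset.mem_filter.mp hg).2]
          ring
      _ = ∑ S : ↥(Sm n), (fun S' : Finset (Fin n) => ee (n := n) S' ↑b *
            ∑ g ∈ G2.filter (fun g => P 2 g = S'), q g * ee (P 3 g) ↑c) ↑S :=
          (Finset.sum_coe_sort (Sm n) _).symm
      _ = ∑ S : ↥(Sm n), N2 b S * P2m S c := by
          apply Finset.sum_congr rfl
          intro S _
          simp only [hN2, hP2m, Matrix.of_apply]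
  -- factor M3
  set N3 : Matrix ↥A ↥(Sm n) ℚ := Matrix.of (fun b S =>
    ∑ g ∈ G3.filter (fun g => P 3 g = ↑S), q g * ee (P 2 g) ↑b) with hN3
  set R3 : Matrix ↥(Sm n) ↥A ℚ := Matrix.of (fun S c => ee (n := n) ↑S ↑c) with hR3
  have hfact3 : M3 = N3 * R3 := by
    ext b c
    rw [Matrix.mul_apply]
    calc M3 b c = ∑ g ∈ G3, q g * (ee (P 2 g) ↑b * ee (P 3 g) ↑c) := rfl
      _ = ∑ S ∈ Sm n, ∑ g ∈ G3.filter (fun g => P 3 g = S),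
            q g * (ee (P 2 g) ↑b * ee (P 3 g) ↑c) :=
          (Finset.sum_fiberwise_of_maps_to (fun g hg => by
            have h12 := (Finset.mem_filter.mp hg).2
            have := P_cards g
            simp only [Sm, mem_filter, mem_univ, true_and]
            omega) _).symm
      _ = ∑ S ∈ Sm n, (fun S' : Finset (Fin n) =>
            (∑ g ∈ G3.filter (fun g => P 3 g = S'), q g * ee (P 2 g) ↑b) *
              ee (n := n) S' ↑c) S := by
          apply Finset.sum_congr rfl
          intro S _
          simp only
          rw [Finset.sum_mul]
          apply Finset.sum_congr rfl
          intro g hg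
          rw [← (Finset.mem_filter.mp hg).2]
          ring
      _ = ∑ S : ↥(Sm n), (fun S' : Finset (Fin n) =>
            (∑ g ∈ G3.filter (fun g => P 3 g = S'), q g * ee (P 2 g) ↑b) *
              ee (n := n) S' ↑c) ↑S :=
          (Finset.sum_coe_sort (Sm n) _).symm
      _ = ∑ S : ↥(Sm n), N3 b S * R3 S c := by
          apply Finset.sum_congr rfl
          intro S _
          simp only [hN3, hR3, Matrix.of_apply]
  have hr2 : M2.rank ≤ (Sm n).card := by
    rw [hfact2]
    exact (Matrix.rank_mul_le_left _ _).trans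
      ((Matrix.rank_le_card_width _).trans (le_of_eq (Fintype.card_coe _)))
  have hr3 : M3.rank ≤ (Sm n).card := by
    rw [hfact3]
    refine (Matrix.rank_mul_le_right _ _).trans ?_
    exact (Matrix.rank_le_card_height _).trans (le_of_eq (Fintype.card_coe _))
  have hrM : M.rank ≤ 2 * (Sm n).card := by
    rw [hMeq]
    have := matrix_rank_add_le M2 M3
    omega
  omega


lemma sum_half_pow (n : ℕ) :
    (∑ S : Finset (Fin n), ((1:ℝ)/2) ^ S.card) = (3/2) ^ n := by
  have h := Finset.prod_add (fun _ : Fin n => (1:ℝ)/2) (fun _ => (1:ℝ)) univ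
  simp only [Finset.prod_const, one_pow, mul_one, Finset.card_univ, Fintype.card_fin,
    Finset.powerset_univ] at h
  rw [show ((1:ℝ)/2 + 1) = 3/2 by norm_num] at h
  rw [← h]

lemma Sm_card_le (n : ℕ) : ((Sm n).card : ℝ) ≤ (3 / 2 ^ ((2:ℝ)/3)) ^ n := by
  have key : ((Sm n).card : ℝ) ≤ 2 ^ ((n:ℝ)/3) * (3/2) ^ n := by
    calc ((Sm n).card : ℝ) = ∑ _S ∈ Sm n, (1:ℝ) := by simp
      _ ≤ ∑ S ∈ Sm n, 2 ^ ((n:ℝ)/3) * ((1:ℝ)/2) ^ S.card := by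
          apply Finset.sum_le_sum
          intro S hS
          have h3 : 3 * S.card ≤ n := (Finset.mem_filter.mp hS).2
          have hx : (0:ℝ) ≤ (n:ℝ)/3 - S.card := by
            have : (3 * S.card : ℝ) ≤ n := by exact_mod_cast h3
            linarith
          have heq : (2:ℝ) ^ ((n:ℝ)/3) * ((1:ℝ)/2) ^ S.card
              = 2 ^ ((n:ℝ)/3 - S.card) := by
            rw [Real.rpow_sub two_pos, Real.rpow_natCast, div_pow, one_pow]
            ring
          rw [heq]
          exact Real.one_le_rpow one_le_two hx
      _ ≤ ∑ S : Finset (Fin n), 2 ^ ((n:ℝ)/3) * ((1:ℝ)/2) ^ S.card := by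
          apply Finset.sum_le_sum_of_subset_of_nonneg (Finset.filter_subset _ _)
          intro S _ _
          positivity
      _ = 2 ^ ((n:ℝ)/3) * ∑ S : Finset (Fin n), ((1:ℝ)/2) ^ S.card := by
          rw [Finset.mul_sum]
      _ = 2 ^ ((n:ℝ)/3) * (3/2) ^ n := by rw [sum_half_pow]
  refine key.trans (le_of_eq ?_)
  have h2 : ((2:ℝ) ^ ((2:ℝ)/3)) ^ n = 2 ^ (((2:ℝ)/3) * n) := by
    rw [← Real.rpow_natCast ((2:ℝ) ^ ((2:ℝ)/3)) n, ← Real.rpow_mul (by norm_num)]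
  have hgoal : (3 / (2:ℝ) ^ ((2:ℝ)/3)) ^ n = 3 ^ n / 2 ^ (((2:ℝ)/3) * n) := by
    rw [div_pow, h2]
  have h3 : ((3:ℝ)/2) ^ n = 3 ^ n / 2 ^ ((n:ℝ)) := by
    rw [Real.rpow_natCast, div_pow]
  rw [hgoal, h3]
  have hsum : (2:ℝ) ^ ((n:ℝ)/3) * 2 ^ (((2:ℝ)/3) * (n:ℝ)) = 2 ^ ((n:ℝ)) := by
    rw [← Real.rpow_add two_pos]
    congr 1
    ring
  have hne : ∀ x : ℝ, (0:ℝ) < (2:ℝ) ^ x := fun x => Real.rpow_pos_of_pos two_pos x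
  rw [mul_div_assoc', div_eq_div_iff (hne _).ne' (hne _).ne', mul_right_comm, hsum]
  ring


lemma global_bound (𝓕 : Finset (Finset (Fin n))) (h𝓕 : SunflowerFree 𝓕) :
    𝓕.card ≤ (n + 1) * (3 * (Sm n).card) := by
  classical
  have hmaps : ∀ a ∈ 𝓕, a.card ∈ Finset.range (n+1) := by
    intro a _
    rw [Finset.mem_range]
    have := Finset.card_le_univ a
    simp only [Finset.card_univ, Fintype.card_fin] at this
    omega
  rw [Finset.card_eq_sum_card_fiberwise hmaps]
  calc ∑ k ∈ Finset.range (n+1), (𝓕.filter fun a => a.card = k).card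
      ≤ ∑ _k ∈ Finset.range (n+1), 3 * (Sm n).card := by
        apply Finset.sum_le_sum
        intro k _
        apply layer_bound _ _ (fun a ha => (Finset.mem_filter.mp ha).2)
        intro a ha b hb c hc
        exact h𝓕 a (Finset.mem_filter.mp ha).1 b (Finset.mem_filter.mp hb).1
          c (Finset.mem_filter.mp hc).1
    _ = (n + 1) * (3 * (Sm n).card) := by
        rw [Finset.sum_const, Finset.card_range, smul_eq_mul]

-- limit fact
lemma aux_tendsto : Tendsto (fun m : ℕ => ((3 * (m + 1) : ℕ) : ℝ) ^ (1 / (m:ℝ)))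
    atTop (nhds 1) := by
  have hnat : Tendsto (fun m : ℕ => ((m:ℝ)) ^ (1 / (m:ℝ))) atTop (nhds 1) :=
    tendsto_rpow_div.comp tendsto_natCast_atTop_atTop
  have hsq : Tendsto (fun m : ℕ => (((m:ℝ)) ^ (1 / (m:ℝ)))^2) atTop (nhds 1) := by
    have := hnat.mul hnat
    simpa [sq] using this
  apply tendsto_of_tendsto_of_tendsto_of_le_of_le' tendsto_const_nhds hsq
  · filter_upwards [eventually_ge_atTop 1] with m hm
    apply Real.one_le_rpow
    · have : (1:ℝ) ≤ (m:ℝ) := by exact_mod_cast hm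
      push_cast
      linarith
    · positivity
  · filter_upwards [eventually_ge_atTop 6] with m hm
    have h1 : ((3 * (m + 1) : ℕ) : ℝ) ≤ ((m:ℝ))^2 := by
      have : 3 * (m + 1) ≤ m^2 := by nlinarith
      exact_mod_cast this
    have h2 : (0:ℝ) ≤ ((3 * (m + 1) : ℕ) : ℝ) := by positivity
    have h3 := Real.rpow_le_rpow h2 h1 (by positivity : (0:ℝ) ≤ 1 / (m:ℝ))
    refine h3.trans (le_of_eq ?_)
    rw [← Real.rpow_natCast ((m:ℝ) ^ (1/(m:ℝ))) 2, ← Real.rpow_natCast (m:ℝ) 2,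
      ← Real.rpow_mul (by positivity), ← Real.rpow_mul (by positivity)]
    ring_nf


theorem final (F : ℕ → ℕ)
    (hFle : ∀ m : ℕ, F m ≤ (m + 1) * (3 * (Sm m).card)) :
    Filter.limsup (fun n : ℕ => (F n : ℝ) ^ (1 / (n : ℝ))) Filter.atTop ≤
      3 / 2 ^ ((2 : ℝ) / 3) := by
  set c : ℝ := 3 / 2 ^ ((2:ℝ)/3) with hc
  have hcpos : 0 < c := by positivity
  have hFle' : ∀ m : ℕ, (F m : ℝ) ≤ ((3 * (m+1) : ℕ) : ℝ) * c ^ m := by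
    intro m
    calc (F m : ℝ) ≤ (((m+1) * (3 * (Sm m).card) : ℕ) : ℝ) := by exact_mod_cast hFle m
      _ = ((3 * (m+1) : ℕ) : ℝ) * ((Sm m).card : ℝ) := by push_cast; ring
      _ ≤ ((3*(m+1):ℕ):ℝ) * c ^ m :=
          mul_le_mul_of_nonneg_left (Sm_card_le m) (by positivity)
  have hev : ∀ᶠ m : ℕ in atTop,
      (F m : ℝ) ^ (1/(m:ℝ)) ≤ ((3*(m+1):ℕ):ℝ) ^ (1/(m:ℝ)) * c := by
    filter_upwards [eventually_ge_atTop 1] with m hm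
    have hmpos : (0:ℝ) < (m:ℝ) := by exact_mod_cast hm
    have hF0 : (0:ℝ) ≤ F m := Nat.cast_nonneg _
    have h1 := Real.rpow_le_rpow hF0 (hFle' m) (by positivity : (0:ℝ) ≤ 1/(m:ℝ))
    refine h1.trans (le_of_eq ?_)
    rw [Real.mul_rpow (by positivity) (by positivity)]
    congr 1
    rw [← Real.rpow_natCast c m, ← Real.rpow_mul hcpos.le, mul_one_div,
      div_self hmpos.ne', Real.rpow_one]
  have hg : Tendsto (fun m : ℕ => ((3*(m+1):ℕ):ℝ) ^ (1/(m:ℝ)) * c) atTop (nhds (1 * c)) :=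
    aux_tendsto.mul_const c
  rw [one_mul] at hg
  have hcob : IsCoboundedUnder (· ≤ ·) atTop (fun m : ℕ => (F m : ℝ) ^ (1/(m:ℝ))) := by
    refine (isBoundedUnder_of_eventually_ge (a := (0:ℝ)) ?_).isCoboundedUnder_le
    exact Eventually.of_forall fun m => Real.rpow_nonneg (Nat.cast_nonneg _) _
  have hmain := limsup_le_limsup hev hcob hg.isBoundedUnder_le
  rwa [hg.limsup_eq] at hmain


end

end SFaux

theorem stmt_4 (F : ℕ → ℕ)
    (hF : ∀ n : ℕ, IsGreatest
      {m : ℕ | ∃ 𝓕 : Finset (Finset (Fin n)), SunflowerFree 𝓕 ∧ 𝓕.card = m} (F n)) :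
    Filter.limsup (fun n : ℕ => (F n : ℝ) ^ (1 / (n : ℝ))) Filter.atTop ≤
      3 / 2 ^ ((2 : ℝ) / 3) := by
  classical
  apply SFaux.final F
  intro m
  obtain ⟨𝓕, h𝓕, hcard⟩ := (hF m).1
  exact hcard ▸ SFaux.global_bound 𝓕 h𝓕
end

section
/- Let k and n be positive integers and let 𝓕 be a k-uniform family of subsets of [n] = {1,2,...,n} that contains no sunflower with 3 petals. Let H₁, H₂, H₃ ∈ 𝓕 and suppose that for every i ∈ [n] the sum v(H₁)ᵢ + v(H₂)ᵢ + v(H₃)ᵢ of the i-th coordinates of their characteristic vectors lies in {0, 1, 3} (equivalently, is never equal to 2). Then H₁ = H₂ = H₃. -/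
theorem stmt_6 (n k : ℕ) (hn : 0 < n) (hk : 0 < k)
    (𝓕 : Finset (Finset (Fin n)))
    (huniform : ∀ F ∈ 𝓕, F.card = k)
    (hsf : SunflowerFree 𝓕)
    (H₁ H₂ H₃ : Finset (Fin n)) (h₁ : H₁ ∈ 𝓕) (h₂ : H₂ ∈ 𝓕) (h₃ : H₃ ∈ 𝓕)
    (hsum : ∀ i : Fin n,
      ((if i ∈ H₁ then 1 else 0) + (if i ∈ H₂ then 1 else 0) +
        (if i ∈ H₃ then 1 else 0) : ℕ) ≠ 2) :
    H₁ = H₂ ∧ H₂ = H₃ := by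
  have key : ∀ i : Fin n, (i ∈ H₁ → i ∈ H₂ → i ∈ H₃) ∧ (i ∈ H₁ → i ∈ H₃ → i ∈ H₂)
      ∧ (i ∈ H₂ → i ∈ H₃ → i ∈ H₁) := by
    intro i
    have := hsum i
    by_cases a : i ∈ H₁ <;> by_cases b : i ∈ H₂ <;> by_cases c : i ∈ H₃ <;>
      simp [a, b, c] at this ⊢
  by_cases e12 : H₁ = H₂
  · have sub : H₂ ⊆ H₃ := fun i hi => (key i).1 (e12 ▸ hi) hi
    have : H₂ = H₃ := Finset.eq_of_subset_of_card_le sub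
      (by rw [huniform H₃ h₃, huniform H₂ h₂])
    exact ⟨e12, this⟩
  by_cases e13 : H₁ = H₃
  · have sub : H₁ ⊆ H₂ := fun i hi => (key i).2.1 hi (e13 ▸ hi)
    have : H₁ = H₂ := Finset.eq_of_subset_of_card_le sub
      (by rw [huniform H₂ h₂, huniform H₁ h₁])
    exact absurd this e12
  by_cases e23 : H₂ = H₃
  · have sub : H₂ ⊆ H₁ := fun i hi => (key i).2.2 hi (e23 ▸ hi)
    have : H₂ = H₁ := Finset.eq_of_subset_of_card_le sub
      (by rw [huniform H₁ h₁, huniform H₂ h₂])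
    exact absurd this.symm e12
  · exfalso
    apply hsf H₁ h₁ H₂ h₂ H₃ h₃
    refine ⟨e12, e13, e23, ?_, ?_, ?_⟩ <;>
      · ext i
        simp only [Finset.mem_inter]
        have := key i
        tauto
end

section
/- Let n and k be integers with 0 ≤ k ≤ n/2. The number of subsets G = {s₁ < s₂ < ... < s_j} of [n] = {1,2,...,n} such that j ≤ k and sᵢ ≥ 2i for every 1 ≤ i ≤ j (including the empty set) equals the binomial coefficient C(n, k). -/
open scoped Classical

/-- `G ⊆ {1,…,n}` is a ballot set of size at most `k`: if the elements of `G`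
in increasing order are `s₁ < s₂ < … < s_j`, then `j ≤ k` and `sᵢ ≥ 2i`
for every `1 ≤ i ≤ j`. -/
def IsBallotSet (k : ℕ) (G : Finset ℕ) : Prop :=
  G.card ≤ k ∧
    ∀ i < (G.sort (· ≤ ·)).length, 2 * (i + 1) ≤ (G.sort (· ≤ ·)).getD i 0

/-!
Split the ballot sets in `{1, …, n+1}` of size at most `k+1` according to whether they contain
`n+1`. Those that do are exactly `insert (n+1) G` for ballot sets `G ⊆ {1, …, n}` of size at most
`k`: the new largest element sits at position at most `k+1`, and `n+1 ≥ 2(k+1)`. This gives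
Pascal's rule. In the boundary case `n = 2k+1` a ballot set in `{1, …, n}` has at most `k`
elements (its largest element is at least twice its size), and `C(2k+1, k+1) = C(2k+1, k)`.
-/

open Finset

theorem Finset.sort_insert_of_forall_lt {α : Type*} [LinearOrder α] {a : α} {s : Finset α}
    (h : ∀ b ∈ s, b < a) : (insert a s).sort (· ≤ ·) = s.sort (· ≤ ·) ++ [a] := by
  have hlt : (s.sort (· ≤ ·) ++ [a]).Pairwise (· < ·) :=
    List.pairwise_append.2 ⟨(sortedLT_sort s).pairwise, List.pairwise_singleton _ _,
      fun b hb _ hc => List.eq_of_mem_singleton hc ▸ h b ((mem_sort _).1 hb)⟩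
  have hset : (s.sort (· ≤ ·) ++ [a]).toFinset = insert a s := by
    ext; simp
  rw [← hset]
  exact (List.toFinset_sort _ hlt.nodup).2 (hlt.imp le_of_lt)

theorem isBallotSet_zero_iff {G : Finset ℕ} : IsBallotSet 0 G ↔ G = ∅ :=
  ⟨fun hG => card_eq_zero.1 (Nat.le_zero.1 hG.1), by rintro rfl; simp [IsBallotSet]⟩

theorem IsBallotSet.two_mul_card_le {k n : ℕ} {G : Finset ℕ} (hG : IsBallotSet k G)
    (hGn : ∀ x ∈ G, x ≤ n) : 2 * #G ≤ n := by
  obtain h0 | hpos := Nat.eq_zero_or_pos #G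
  · omega
  have hlast : #G - 1 < (G.sort (· ≤ ·)).length := by rw [length_sort]; omega
  have hmax := hGn _ ((mem_sort _).1 (List.getElem_mem hlast))
  have := hG.2 _ hlast
  rw [List.getD_eq_getElem _ _ hlast] at this
  omega

theorem isBallotSet_succ_insert_iff {k a : ℕ} {G : Finset ℕ} (hG : ∀ x ∈ G, x < a)
    (hk : 2 * (k + 1) ≤ a) : IsBallotSet (k + 1) (insert a G) ↔ IsBallotSet k G := by
  have hcard : #(insert a G) = #G + 1 := card_insert_of_notMem fun ha => (hG a ha).false
  have hlen : (G.sort (· ≤ ·)).length = #G := length_sort _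
  unfold IsBallotSet
  rw [sort_insert_of_forall_lt hG, hcard, List.length_append, List.length_singleton, hlen,
    Nat.add_le_add_iff_right]
  refine and_congr_right fun hGk => ⟨fun h i hi => ?_, fun h i hi => ?_⟩
  · rw [← hlen] at hi
    simpa only [List.getD_append _ _ _ _ hi] using h i (by omega)
  · rcases Nat.lt_succ_iff_lt_or_eq.1 hi with hi | rfl
    · rw [← hlen] at hi
      rw [List.getD_append _ _ _ _ hi]
      exact h i (by omega)
    · rw [List.getD_append_right _ _ _ _ hlen.le, hlen, Nat.sub_self, List.getD_cons_zero]
      omega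

noncomputable def ballotSets (n k : ℕ) : Finset (Finset ℕ) :=
  (Icc 1 n).powerset.filter (fun G => IsBallotSet k G)

theorem ballotSets_zero_right (n : ℕ) : ballotSets n 0 = {∅} := by
  ext G
  simp only [ballotSets, mem_filter, mem_powerset, isBallotSet_zero_iff, mem_singleton]
  exact ⟨And.right, fun h => ⟨h ▸ empty_subset _, h⟩⟩

theorem ballotSets_succ_of_lt {n k : ℕ} (h : n < 2 * (k + 1)) :
    ballotSets n (k + 1) = ballotSets n k := by
  refine filter_congr fun G hG => ⟨fun hB => ⟨?_, hB.2⟩, fun hB => ⟨hB.1.trans k.le_succ, hB.2⟩⟩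
  have := hB.two_mul_card_le fun x hx => (mem_Icc.1 (mem_powerset.1 hG hx)).2
  omega

theorem card_ballotSets_succ_succ {n k : ℕ} (h : 2 * (k + 1) ≤ n + 1) :
    #(ballotSets (n + 1) (k + 1)) = #(ballotSets n (k + 1)) + #(ballotSets n k) := by
  have hlt : ∀ G ∈ (Icc 1 n).powerset, ∀ x ∈ G, x < n + 1 := fun G hG x hx =>
    Nat.lt_succ_of_le (mem_Icc.1 (mem_powerset.1 hG hx)).2
  have hnotMem : ∀ G ∈ (Icc 1 n).powerset, n + 1 ∉ G := fun G hG hn => (hlt G hG _ hn).false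
  have hinsert : ((Icc 1 n).powerset.image (insert (n + 1))).filter (IsBallotSet (k + 1)) =
      (ballotSets n k).image (insert (n + 1)) := by
    rw [filter_image, ballotSets]
    congr 1
    exact filter_congr fun G hG => isBallotSet_succ_insert_iff (hlt G hG) h
  rw [ballotSets, ← insert_Icc_right_eq_Icc_add_one (by omega), powerset_insert, filter_union,
    hinsert, card_union_of_disjoint, card_image_of_injOn]
  · rfl
  · intro G hG G' hG' hGG'
    rw [← erase_insert (hnotMem G (mem_filter.1 hG).1), hGG',
      erase_insert (hnotMem G' (mem_filter.1 hG').1)]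
  · refine disjoint_left.2 fun G hG hG' => hnotMem G (mem_filter.1 hG).1 ?_
    obtain ⟨G', -, rfl⟩ := mem_image.1 hG'
    exact mem_insert_self _ _

theorem stmt_7 (n k : ℕ) (h : 2 * k ≤ n) :
    ((Finset.Icc 1 n).powerset.filter (fun G => IsBallotSet k G)).card =
      Nat.choose n k := by
  change #(ballotSets n k) = n.choose k
  induction n generalizing k with
  | zero =>
    obtain rfl : k = 0 := by omega
    simp [ballotSets_zero_right]
  | succ n ih =>
    cases k with
    | zero => simp [ballotSets_zero_right]
    | succ k =>
      rw [card_ballotSets_succ_succ h, ih k (by omega), Nat.choose_succ_succ', add_comm]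
      rcases h.lt_or_eq with hlt | heq
      · rw [ih (k + 1) (by omega)]
      · obtain rfl : n = 2 * k + 1 := by omega
        rw [ballotSets_succ_of_lt (by omega), ih k (by omega), Nat.choose_symm_half]
end

section
/- Let c be a positive integer and suppose that for every positive integer k, every k-uniform family of finite sets containing no sunflower with 3 petals satisfies |⋃_{F ∈ 𝓕} F| ≤ c·k. Then for every positive integer k, every k-uniform family 𝓕 of finite sets containing no sunflower with 3 petals satisfies |𝓕| ≤ 3·C(c·k, ⌊c·k/3⌋), where C(c·k, ⌊c·k/3⌋) denotes the binomial coefficient. -/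
lemma choose_mono_right {n r s : ℕ} (hrs : r ≤ s) (hs : s ≤ n / 2) :
    n.choose r ≤ n.choose s := by
  induction s, hrs using Nat.le_induction with
  | base => exact le_refl _
  | succ s hs' ih =>
      have h1 : s < n / 2 := lt_of_lt_of_le (Nat.lt_succ_self s) hs
      exact le_trans (ih (le_of_lt h1)) (Nat.choose_le_succ_of_lt_half_left h1)

/-- the 5-cycle: a 2-uniform sunflower-free family with union of size 5 -/
def C5 : Finset (Finset ℕ) := {{0,1},{1,2},{2,3},{3,4},{4,0}}

theorem stmt_8 (c : ℕ) (hc : 0 < c)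
    (hunion : ∀ (α : Type) [DecidableEq α] (k : ℕ), 0 < k →
      ∀ 𝓕 : Finset (Finset α), (∀ F ∈ 𝓕, F.card = k) → SunflowerFree 𝓕 →
        (𝓕.sup id).card ≤ c * k) :
    ∀ (α : Type) [DecidableEq α] (k : ℕ), 0 < k →
      ∀ 𝓕 : Finset (Finset α), (∀ F ∈ 𝓕, F.card = k) → SunflowerFree 𝓕 →
        𝓕.card ≤ 3 * Nat.choose (c * k) (c * k / 3) := by
  by_cases hc3 : 3 ≤ c
  · intro α _ k hk 𝓕 hcard hsf
    have hm := hunion α k hk 𝓕 hcard hsf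
    have hsub : 𝓕 ⊆ (𝓕.sup id).powersetCard k := by
      intro F hF
      rw [Finset.mem_powersetCard]
      exact ⟨Finset.le_sup (f := id) hF, hcard F hF⟩
    have h1 : 𝓕.card ≤ ((𝓕.sup id).card).choose k := by
      calc 𝓕.card ≤ ((𝓕.sup id).powersetCard k).card := Finset.card_le_card hsub
        _ = ((𝓕.sup id).card).choose k := Finset.card_powersetCard _ _
    have h2 : ((𝓕.sup id).card).choose k ≤ (c * k).choose k :=
      Nat.choose_le_choose k hm
    have hk3 : k ≤ c * k / 3 := by
      calc k = 3 * k / 3 := by omega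
        _ ≤ c * k / 3 := Nat.div_le_div_right (Nat.mul_le_mul_right k hc3)
    have h3 : (c * k).choose k ≤ (c * k).choose (c * k / 3) :=
      choose_mono_right hk3 (Nat.div_le_div_left (by norm_num) (by norm_num))
    calc 𝓕.card ≤ (c * k).choose (c * k / 3) := le_trans h1 (le_trans h2 h3)
      _ ≤ 3 * (c * k).choose (c * k / 3) := Nat.le_mul_of_pos_left _ (by norm_num)
  · exfalso
    have h := hunion ℕ 2 (by norm_num) C5 (by decide) (by unfold SunflowerFree IsSunflower3; decide)
    have h5 : (C5.sup id).card = 5 := by decide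
    omega
end

section
/- Suppose there exists a constant C > 0 such that for every positive integer k, every k-uniform family 𝓕 of finite sets containing no sunflower with 3 petals satisfies |⋃_{F ∈ 𝓕} F| ≤ C·k. Then there exists a constant D > 0 such that for every positive integer k, every k-uniform family 𝓕 of finite sets containing no sunflower with 3 petals satisfies |𝓕| ≤ D^k. -/
theorem stmt_9
    (hunion : ∃ C : ℝ, 0 < C ∧
      ∀ (α : Type) [DecidableEq α] (k : ℕ), 0 < k →
        ∀ 𝓕 : Finset (Finset α), (∀ F ∈ 𝓕, F.card = k) → SunflowerFree 𝓕 →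
          ((𝓕.sup id).card : ℝ) ≤ C * k) :
    ∃ D : ℝ, 0 < D ∧
      ∀ (α : Type) [DecidableEq α] (k : ℕ), 0 < k →
        ∀ 𝓕 : Finset (Finset α), (∀ F ∈ 𝓕, F.card = k) → SunflowerFree 𝓕 →
          (𝓕.card : ℝ) ≤ D ^ k := by
  obtain ⟨C, hC, hbound⟩ := hunion
  refine ⟨(2 : ℝ) ^ ⌈C⌉₊, by positivity, ?_⟩
  intro α _ k hk 𝓕 hcard hsf
  have hn : ((𝓕.sup id).card : ℝ) ≤ C * k := hbound α k hk 𝓕 hcard hsf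
  have hnk : (𝓕.sup id).card ≤ ⌈C⌉₊ * k := by
    have : ((𝓕.sup id).card : ℝ) ≤ (⌈C⌉₊ * k : ℕ) := by
      push_cast
      exact hn.trans (by
        have := Nat.le_ceil C
        nlinarith [this, (Nat.cast_pos.mpr hk : (0:ℝ) < k)])
    exact_mod_cast this
  have hsub : 𝓕 ⊆ (𝓕.sup id).powerset := by
    intro F hF
    exact Finset.mem_powerset.mpr (Finset.le_sup (f := id) hF)
  have h1 : 𝓕.card ≤ 2 ^ (𝓕.sup id).card := by
    simpa [Finset.card_powerset] using Finset.card_le_card hsub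
  have h2 : (𝓕.card : ℝ) ≤ (2 : ℝ) ^ (𝓕.sup id).card := by
    exact_mod_cast h1
  calc (𝓕.card : ℝ) ≤ (2 : ℝ) ^ (𝓕.sup id).card := h2
    _ ≤ (2 : ℝ) ^ (⌈C⌉₊ * k) := by
        exact pow_le_pow_right₀ one_le_two hnk
    _ = ((2 : ℝ) ^ ⌈C⌉₊) ^ k := by rw [pow_mul]
end
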